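/- arXiv:2603.29970 — 6 statements merged into one kernel-verified Lean document; each statement's English description precedes it below -/
import Mathlib

section
/- Assume the abc Conjecture. Then for every real η > 0 there exists a constant C > 0 such that for all real X ≥ 2, the number of pairs (x, u) of integers with x ≥ 1, x > X^(1/11), and 1 ≤ |5·x^22 − u^2| ≤ 4X is at most C · X^(1/5 + η). -/
open Real

/-- The radical of a natural number: the product of its distinct prime factors. -/
def rad (n : ℕ) : ℕ := ∏ p ∈ n.primeFactors, p

/-- The abc Conjecture: for every ε > 0 there is a constant `C > 0` such that for all
nonzero coprime integers `a`, `b`, `c` with `a + b = c` one has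
`|c| ≤ C * rad(abc)^(1+ε)`. -/
def ABCConjecture : Prop :=
  ∀ ε : ℝ, 0 < ε → ∃ C : ℝ, 0 < C ∧ ∀ a b c : ℤ,
    a ≠ 0 → b ≠ 0 → c ≠ 0 → IsCoprime a b → a + b = c →
    ((|c| : ℤ) : ℝ) ≤ C * (rad (a * b * c).natAbs : ℝ) ^ (1 + ε)

/-!
Write `z = 5x²² - u²`, so that `1 ≤ |z| ≤ 4X < 4x¹¹` and `|u| ≤ 3x¹¹`. The abc inequality for
`u² + z = 5x²²`, with the common factor `gcd(u², z) ≤ |z|` removed, and the bound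
`rad(u² z x²²) ≤ 5|u| x |z|` give `x²² ≪ |z| (x¹² |z|)^(1+ε)`, i.e. `x^(10-12ε) ≪ X^(2+ε)`, so
`x ≪ X^(1/5+η)`. For each such `x`, `|5x²² - u²| < 2√(5x²²)` confines `|u|` to within `1` of
`⌊√(5x²²)⌋`, which leaves at most six values of `u`.
-/

lemma rad_le_self {n : ℕ} (hn : n ≠ 0) : rad n ≤ n :=
  Nat.le_of_dvd (Nat.pos_of_ne_zero hn) (Nat.prod_primeFactors_dvd n)

lemma rad_le_rad_of_dvd {m n : ℕ} (h : m ∣ n) (hn : n ≠ 0) : rad m ≤ rad n :=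
  Finset.prod_le_prod_of_subset_of_one_le' (Nat.primeFactors_mono h hn)
    fun _ hp _ ↦ (Nat.prime_of_mem_primeFactors hp).one_le

lemma rad_pow (n : ℕ) {k : ℕ} (hk : k ≠ 0) : rad (n ^ k) = rad n := by
  rw [rad, Nat.primeFactors_pow n hk, rad]

lemma rad_natAbs_le_of_dvd_pow {m n : ℤ} {k : ℕ} (h : m ∣ n ^ k) (hn : n ≠ 0) (hk : k ≠ 0) :
    rad m.natAbs ≤ n.natAbs := by
  have hdvd : m.natAbs ∣ n.natAbs ^ k := by rw [← Int.natAbs_pow]; exact Int.natAbs_dvd_natAbs.2 h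
  calc rad m.natAbs ≤ rad (n.natAbs ^ k) := rad_le_rad_of_dvd hdvd (by positivity)
    _ = rad n.natAbs := rad_pow _ hk
    _ ≤ n.natAbs := rad_le_self (Int.natAbs_ne_zero.2 hn)

-- Dividing `a` and `b` by their gcd can only lower the radical.
theorem ABCConjecture.abs_add_le_gcd_mul_rad (habc : ABCConjecture) {ε : ℝ} (hε : 0 < ε) :
    ∃ C : ℝ, 0 < C ∧ ∀ a b : ℤ, a ≠ 0 → b ≠ 0 →
      ((|a + b| : ℤ) : ℝ) ≤ Int.gcd a b * C * (rad (a * b * (a + b)).natAbs : ℝ) ^ (1 + ε) := by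
  obtain ⟨C, hC, hineq⟩ := habc ε hε
  refine ⟨C, hC, fun a b ha hb ↦ ?_⟩
  set g := Int.gcd a b with hg
  have hg0 : 0 < g := Int.gcd_pos_of_ne_zero_left b ha
  clear_value g
  obtain ⟨a', rfl⟩ : (g : ℤ) ∣ a := hg ▸ Int.gcd_dvd_left a b
  obtain ⟨b', rfl⟩ : (g : ℤ) ∣ b := hg ▸ Int.gcd_dvd_right _ _
  have hcop : IsCoprime a' b' := by
    rw [Int.isCoprime_iff_gcd_eq_one]
    rw [Int.gcd_mul_left, Int.natAbs_natCast] at hg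
    exact (Nat.mul_eq_left hg0.ne').1 hg.symm
  have hsum : (g : ℤ) * a' + g * b' = g * (a' + b') := by ring
  rcases eq_or_ne (a' + b') 0 with hc | hc
  · rw [hsum, hc, mul_zero, abs_zero, Int.cast_zero]
    positivity
  have hrad : rad (a' * b' * (a' + b')).natAbs ≤
      rad (g * a' * (g * b') * (g * a' + g * b')).natAbs := by
    refine rad_le_rad_of_dvd (Int.natAbs_dvd_natAbs.2 ⟨g ^ 3, by ring⟩) ?_
    simp [ha, hb, hsum, hc, hg0.ne']
  calc ((|g * a' + g * b'| : ℤ) : ℝ) = g * ((|a' + b'| : ℤ) : ℝ) := by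
        rw [hsum, abs_mul, Int.abs_natCast]; push_cast; ring
    _ ≤ g * (C * (rad (a' * b' * (a' + b')).natAbs : ℝ) ^ (1 + ε)) := by
        gcongr
        exact hineq a' b' _ (right_ne_zero_of_mul ha) (right_ne_zero_of_mul hb) hc hcop rfl
    _ ≤ _ := by
        rw [← mul_assoc]
        gcongr

lemma abs_le_three_mul_pow_of_abs_five_pow_sub_sq_lt {x u : ℤ} (hx : 1 ≤ x)
    (h : |5 * x ^ 22 - u ^ 2| < 4 * x ^ 11) : u ≠ 0 ∧ |u| ≤ 3 * x ^ 11 := by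
  have hx11 : x ^ 11 ≤ x ^ 22 := pow_le_pow_right₀ hx (by norm_num)
  have hpos : 0 < x ^ 11 := by positivity
  obtain ⟨hlo, hhi⟩ := abs_lt.1 h
  refine ⟨fun hu ↦ ?_, abs_le_of_sq_le_sq (by nlinarith) (by positivity)⟩
  subst hu
  linarith

theorem ABCConjecture.rpow_le_of_abs_five_pow_sub_sq_lt (habc : ABCConjecture) {ε : ℝ}
    (hε : 0 < ε) : ∃ K : ℝ, 0 < K ∧ ∀ x u : ℤ, 1 ≤ x → 5 * x ^ 22 - u ^ 2 ≠ 0 →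
      |5 * x ^ 22 - u ^ 2| < 4 * x ^ 11 →
        (x : ℝ) ^ (10 - 12 * ε) ≤ K * |((5 * x ^ 22 - u ^ 2 : ℤ) : ℝ)| ^ (2 + ε) := by
  obtain ⟨C, hC, hineq⟩ := habc.abs_add_le_gcd_mul_rad hε
  refine ⟨C * 15 ^ (1 + ε), by positivity, fun x u hx hz hzx ↦ ?_⟩
  obtain ⟨hu, hux⟩ := abs_le_three_mul_pow_of_abs_five_pow_sub_sq_lt hx hzx
  set z := 5 * x ^ 22 - u ^ 2
  have hsum : u ^ 2 + z = 5 * x ^ 22 := by ring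
  have hgcd : Int.gcd (u ^ 2) z ≤ |(z : ℝ)| := by
    rw [← Int.cast_abs, ← Int.natCast_natAbs]
    exact_mod_cast Int.gcd_le_natAbs_right _ hz
  have hrad : rad (u ^ 2 * z * (u ^ 2 + z)).natAbs ≤ (5 * u * x * z).natAbs := by
    refine rad_natAbs_le_of_dvd_pow (k := 22) ⟨5 ^ 21 * u ^ 20 * z ^ 21, by rw [hsum]; ring⟩
      (by positivity) (by norm_num)
  have hrad' : (rad (u ^ 2 * z * (u ^ 2 + z)).natAbs : ℝ) ≤ 15 * (x : ℝ) ^ 12 * |(z : ℝ)| := by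
    have hux' : |(u : ℝ)| ≤ 3 * (x : ℝ) ^ 11 := by exact_mod_cast hux
    have hx0 : (0 : ℝ) ≤ x := by exact_mod_cast (zero_le_one.trans hx)
    calc (rad (u ^ 2 * z * (u ^ 2 + z)).natAbs : ℝ) ≤ (5 * u * x * z).natAbs := by
          exact_mod_cast hrad
      _ = 5 * |(u : ℝ)| * x * |(z : ℝ)| := by
          rw [Nat.cast_natAbs]
          push_cast
          rw [abs_mul, abs_mul, abs_mul, abs_of_nonneg hx0]
          norm_num
      _ ≤ 5 * (3 * (x : ℝ) ^ 11) * x * |(z : ℝ)| := by gcongr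
      _ = 15 * (x : ℝ) ^ 12 * |(z : ℝ)| := by ring
  have habc' :
      (5 : ℝ) * (x : ℝ) ^ 22 ≤ |(z : ℝ)| * C * (15 * (x : ℝ) ^ 12 * |(z : ℝ)|) ^ (1 + ε) := by
    calc (5 : ℝ) * (x : ℝ) ^ 22 = ((|u ^ 2 + z| : ℤ) : ℝ) := by
          rw [hsum, abs_of_pos (by positivity)]; push_cast; ring
      _ ≤ _ := hineq (u ^ 2) z (pow_ne_zero 2 hu) hz
      _ ≤ _ := by gcongr
  have hx0 : (0 : ℝ) < x := by exact_mod_cast zero_lt_one.trans_le hx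
  have hz0 : (0 : ℝ) < |(z : ℝ)| := by positivity
  rw [show 10 - 12 * ε = (22 : ℕ) - 12 * (1 + ε) by push_cast; ring, rpow_sub hx0,
    div_le_iff₀ (by positivity), rpow_natCast,
    show (12 : ℝ) * (1 + ε) = (12 : ℕ) * (1 + ε) by norm_num, rpow_natCast_mul hx0.le]
  calc (x : ℝ) ^ 22 ≤ 5 * (x : ℝ) ^ 22 := by nlinarith [pow_pos hx0 22]
    _ ≤ |(z : ℝ)| * C * (15 * (x : ℝ) ^ 12 * |(z : ℝ)|) ^ (1 + ε) := habc'
    _ = C * 15 ^ (1 + ε) * (|(z : ℝ)| * |(z : ℝ)| ^ (1 + ε)) * ((x : ℝ) ^ 12) ^ (1 + ε) := by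
        rw [mul_rpow (by positivity) hz0.le, mul_rpow (by norm_num) (by positivity)]; ring
    _ = _ := by rw [← rpow_one_add' hz0.le (by linarith)]; ring_nf

lemma Int.sqrt_sq_le {n : ℤ} (hn : 0 ≤ n) : Int.sqrt n ^ 2 ≤ n := by
  lift n to ℕ using hn
  rw [Int.sqrt_natCast]
  exact_mod_cast Nat.sqrt_le' n

lemma Int.lt_sqrt_add_one_sq {n : ℤ} (hn : 0 ≤ n) : n < (Int.sqrt n + 1) ^ 2 := by
  lift n to ℕ using hn
  rw [Int.sqrt_natCast]
  exact_mod_cast Nat.lt_succ_sqrt' n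

lemma Int.le_sqrt_of_sq_le {m n : ℤ} (hm : 0 ≤ m) (h : m ^ 2 ≤ n) : m ≤ Int.sqrt n := by
  lift m to ℕ using hm
  lift n to ℕ using (sq_nonneg (m : ℤ)).trans h
  rw [Int.sqrt_natCast]
  exact_mod_cast Nat.le_sqrt'.2 (by exact_mod_cast h)

noncomputable def nearSquareRoots (n : ℤ) : Finset ℤ :=
  Finset.Icc (Int.sqrt n - 1) (Int.sqrt n + 1) ∪ Finset.Icc (-Int.sqrt n - 1) (-Int.sqrt n + 1)

lemma card_nearSquareRoots_le (n : ℤ) : (nearSquareRoots n).card ≤ 6 := by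
  refine (Finset.card_union_le _ _).trans ?_
  simp only [Int.card_Icc]
  omega

lemma mem_nearSquareRoots {n u : ℤ} (hn : 0 ≤ n) (h : |n - u ^ 2| < 2 * Int.sqrt n) :
    u ∈ nearSquareRoots n := by
  have hs0 := Int.sqrt_nonneg n
  have hlo := Int.sqrt_sq_le hn
  have hhi := Int.lt_sqrt_add_one_sq hn
  obtain ⟨h₁, h₂⟩ := abs_lt.1 h
  have hu : u ^ 2 = |u| ^ 2 := (sq_abs u).symm
  have hu_le : |u| ≤ Int.sqrt n + 1 := by
    by_contra! hcon
    nlinarith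
  have hu_ge : Int.sqrt n - 1 ≤ |u| := by
    by_contra! hcon
    nlinarith [abs_nonneg u]
  simp only [nearSquareRoots, Finset.mem_union, Finset.mem_Icc]
  rcases abs_cases u with ⟨habs, _⟩ | ⟨habs, _⟩ <;> rw [habs] at hu_le hu_ge <;> omega

lemma mem_nearSquareRoots_five_pow {x u : ℤ} (hx : 1 ≤ x)
    (h : |5 * x ^ 22 - u ^ 2| < 4 * x ^ 11) : u ∈ nearSquareRoots (5 * x ^ 22) := by
  have hsqrt : 2 * x ^ 11 ≤ Int.sqrt (5 * x ^ 22) :=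
    Int.le_sqrt_of_sq_le (by positivity) (by nlinarith [pow_pos (zero_lt_one.trans_le hx) 22])
  exact mem_nearSquareRoots (by positivity) (by linarith)

lemma abs_five_pow_sub_sq_lt_of_rpow_inv_lt {X : ℝ} (hX : 0 ≤ X) {x u : ℤ}
    (hxX : X ^ ((1 : ℝ) / 11) < x) (hzX : ((|5 * x ^ 22 - u ^ 2| : ℤ) : ℝ) ≤ 4 * X) :
    |5 * x ^ 22 - u ^ 2| < 4 * x ^ 11 := by
  have hx0 : (0 : ℝ) ≤ x := (rpow_nonneg hX _).trans hxX.le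
  have hx11 : X < (x : ℝ) ^ 11 := by
    rw [one_div, rpow_inv_lt_iff_of_pos hX hx0 (by norm_num)] at hxX
    exact_mod_cast hxX
  have h : ((|5 * x ^ 22 - u ^ 2| : ℤ) : ℝ) < 4 * (x : ℝ) ^ 11 := hzX.trans_lt (by linarith)
  exact_mod_cast h

lemma ncard_le_card_mul_of_forall_mem {α β : Type*} {S : Set (α × β)} {s : Finset α}
    {F : α → Finset β} {k : ℕ} (hS : ∀ p ∈ S, p.1 ∈ s ∧ p.2 ∈ F p.1)
    (hF : ∀ a ∈ s, (F a).card ≤ k) : S.ncard ≤ s.card * k := by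
  classical
  have hsub : S ⊆ ↑(s.biUnion fun a ↦ (F a).map (Function.Embedding.sectR a β)) := by
    intro p hp
    simp only [Finset.coe_biUnion, Finset.coe_map, Set.mem_iUnion, Set.mem_image, Finset.mem_coe]
    exact ⟨p.1, (hS p hp).1, p.2, (hS p hp).2, rfl⟩
  calc S.ncard ≤ _ := Set.ncard_le_ncard hsub (Finset.finite_toSet _)
    _ = _ := Set.ncard_coe_finset _
    _ ≤ s.card * k :=
        Finset.card_biUnion_le_card_mul _ _ _ fun a ha ↦ (Finset.card_map _).trans_le (hF a ha)

lemma le_mul_rpow_of_rpow_le_mul_rpow {x K Y a b c : ℝ} (hx : 0 ≤ x) (hK : 0 ≤ K) (hY : 1 ≤ Y)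
    (ha : 0 < a) (hbc : b ≤ a * c) (h : x ^ a ≤ K * Y ^ b) : x ≤ K ^ a⁻¹ * Y ^ c := by
  have hY0 : 0 ≤ Y := zero_le_one.trans hY
  calc x = (x ^ a) ^ a⁻¹ := (rpow_rpow_inv hx ha.ne').symm
    _ ≤ (K * Y ^ b) ^ a⁻¹ := rpow_le_rpow (by positivity) h (inv_nonneg.2 ha.le)
    _ = K ^ a⁻¹ * Y ^ (b * a⁻¹) := by rw [mul_rpow hK (by positivity), ← rpow_mul hY0]
    _ ≤ K ^ a⁻¹ * Y ^ c := by
        gcongr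
        rw [← div_eq_mul_inv, div_le_iff₀' ha]
        exact hbc

theorem ABCConjecture.le_mul_rpow_of_abs_five_pow_sub_sq_le (habc : ABCConjecture) {η : ℝ}
    (hη : 0 < η) : ∃ K : ℝ, 0 < K ∧ ∀ X : ℝ, 1 ≤ X → ∀ x u : ℤ, 1 ≤ x →
      5 * x ^ 22 - u ^ 2 ≠ 0 → |5 * x ^ 22 - u ^ 2| < 4 * x ^ 11 →
        ((|5 * x ^ 22 - u ^ 2| : ℤ) : ℝ) ≤ 4 * X → (x : ℝ) ≤ K * X ^ ((1 : ℝ) / 5 + η) := by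
  -- `2 + ε ≤ (10 - 12ε)(1/5 + η)` once `ε ≤ η` and `ε ≤ 1/6`.
  set ε := min η (1 / 6)
  have hε : 0 < ε := lt_min hη (by norm_num)
  have hεη : ε ≤ η := min_le_left _ _
  have hε6 : ε ≤ 1 / 6 := min_le_right _ _
  obtain ⟨K, hK, hheight⟩ := habc.rpow_le_of_abs_five_pow_sub_sq_lt hε
  refine ⟨(K * 4 ^ (2 + ε)) ^ (10 - 12 * ε)⁻¹, by positivity, fun X hX x u hx hz hzx hzX ↦ ?_⟩
  refine le_mul_rpow_of_rpow_le_mul_rpow (by exact_mod_cast (zero_le_one.trans hx))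
    (by positivity) hX (by linarith) (b := 2 + ε) (by nlinarith) ?_
  calc (x : ℝ) ^ (10 - 12 * ε) ≤ K * |((5 * x ^ 22 - u ^ 2 : ℤ) : ℝ)| ^ (2 + ε) :=
        hheight x u hx hz hzx
    _ ≤ K * (4 * X) ^ (2 + ε) := by
        gcongr
        exact_mod_cast hzX
    _ = K * 4 ^ (2 + ε) * X ^ (2 + ε) := by
        rw [mul_rpow (by norm_num) (by linarith)]; ring

theorem abc_implies_E4_bound (habc : ABCConjecture) :
    ∀ η : ℝ, 0 < η → ∃ C : ℝ, 0 < C ∧ ∀ X : ℝ, 2 ≤ X →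
      (Set.ncard {p : ℤ × ℤ | 1 ≤ p.1 ∧ X ^ ((1 : ℝ) / 11) < (p.1 : ℝ) ∧
          1 ≤ |5 * p.1 ^ 22 - p.2 ^ 2| ∧ ((|5 * p.1 ^ 22 - p.2 ^ 2| : ℤ) : ℝ) ≤ 4 * X} : ℝ)
        ≤ C * X ^ ((1 : ℝ) / 5 + η) := by
  intro η hη
  obtain ⟨K, hK, hheight⟩ := habc.le_mul_rpow_of_abs_five_pow_sub_sq_le hη
  refine ⟨6 * K, by positivity, fun X hX ↦ ?_⟩
  set S := {p : ℤ × ℤ | 1 ≤ p.1 ∧ X ^ ((1 : ℝ) / 11) < (p.1 : ℝ) ∧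
    1 ≤ |5 * p.1 ^ 22 - p.2 ^ 2| ∧ ((|5 * p.1 ^ 22 - p.2 ^ 2| : ℤ) : ℝ) ≤ 4 * X}
  set B := ⌊K * X ^ ((1 : ℝ) / 5 + η)⌋₊
  have hmem : ∀ p ∈ S, p.1 ∈ Finset.Icc 1 (B : ℤ) ∧ p.2 ∈ nearSquareRoots (5 * p.1 ^ 22) := by
    rintro ⟨x, u⟩ ⟨hx, hxX, hz, hzX⟩
    dsimp only at hx hxX hz hzX ⊢
    have hzx := abs_five_pow_sub_sq_lt_of_rpow_inv_lt (by linarith) hxX hzX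
    refine ⟨Finset.mem_Icc.2 ⟨hx, ?_⟩, mem_nearSquareRoots_five_pow hx hzx⟩
    have hxB : (x : ℝ) ≤ K * X ^ ((1 : ℝ) / 5 + η) :=
      hheight X (by linarith) x u hx (abs_pos.1 (by omega)) hzx hzX
    lift x to ℕ using (by omega)
    exact_mod_cast Nat.le_floor hxB
  have hcount := ncard_le_card_mul_of_forall_mem (F := fun x ↦ nearSquareRoots (5 * x ^ 22)) hmem
    fun _ _ ↦ card_nearSquareRoots_le _
  calc (S.ncard : ℝ) ≤ ((Finset.Icc 1 (B : ℤ)).card * 6 : ℕ) := by exact_mod_cast hcount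
    _ = 6 * (B : ℝ) := by
        rw [Int.card_Icc, add_sub_cancel_right, Int.toNat_natCast]; push_cast; ring
    _ ≤ 6 * (K * X ^ ((1 : ℝ) / 5 + η)) := by gcongr; exact Nat.floor_le (by positivity)
    _ = 6 * K * X ^ ((1 : ℝ) / 5 + η) := by ring
end

section
/- Assume the abc Conjecture. Then there exists a constant C > 0 such that for all real X ≥ 2, the number of primes ℓ ≤ X for which there exist integers x ≥ 1 and y with y^2 = x^11 + ℓ or y^2 = x^11 − ℓ is at most C · X^(13/22). -/
/-!
Write a solution as `x¹¹ + b = y²` with `|b| = ℓ`. Since `ℓ ∤ x` the triple is coprime, and abc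
with `ε = 1/15`, together with `rad(x¹¹ b y²) ≤ x ℓ |y|` and `y² ≤ x¹³`, gives `x³ ≪ ℓ^(16/15)`
once `x¹¹ > 2ℓ`; hence `x ≪ X^(13/22)`. Every counted prime is `|y² - x¹¹|` for such an `x` and
some `y ≥ 0` with `|y² - x¹¹| ≤ X`. For fixed `x` these `y` fill an interval of length
`√(x¹¹ + X) - √(x¹¹ - X)`, which is at most `√(2X)` and, for `x¹¹ > X`, at most `2X / x^(11/2)`.
Summing over `x` with `X = t²²` gives `O(t¹³)` values of `y`, plus one per value of `x`.
-/

open Real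

theorem rad_dvd_of_dvd_pow {n m k : ℕ} (h : n ∣ m ^ k) (hm : m ≠ 0) : rad n ∣ m := by
  have hpow : (m ^ k).primeFactors ⊆ m.primeFactors := by
    rcases Nat.eq_zero_or_pos k with rfl | hk
    · simp
    · rw [Nat.primeFactors_pow m hk.ne']
  have hsub := (Nat.primeFactors_mono h (pow_ne_zero k hm)).trans hpow
  exact (Finset.prod_dvd_prod_of_subset _ _ _ hsub).trans (Nat.prod_primeFactors_dvd m)

theorem rad_natAbs_pow_mul_mul_pow_le {a b c : ℤ} (k m : ℕ) (habc : a * b * c ≠ 0) :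
    rad (a ^ k * b * c ^ m).natAbs ≤ (a * b * c).natAbs := by
  have hdvd : a ^ k * b * c ^ m ∣ (a * b * c) ^ (k + m + 1) := by
    rw [mul_pow, mul_pow]
    exact mul_dvd_mul (mul_dvd_mul (pow_dvd_pow a (by omega)) (dvd_pow_self b (by omega)))
      (pow_dvd_pow c (by omega))
  exact Nat.le_of_dvd (Int.natAbs_pos.2 habc)
    (rad_dvd_of_dvd_pow (Int.natAbs_dvd_natAbs.2 hdvd |>.trans (by rw [Int.natAbs_pow]))
      (Int.natAbs_ne_zero.2 habc))

theorem rad_rpow_le_of_sq_le_pow {x b y : ℤ} (hx : 0 ≤ x) (hxby : x * b * y ≠ 0)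
    (hy : (y : ℝ) ^ 2 ≤ (x : ℝ) ^ 13) :
    (rad (x ^ 11 * b * y ^ 2).natAbs : ℝ) ^ (1 + (1 : ℝ) / 15)
      ≤ |(b : ℝ)| ^ ((16 : ℝ) / 15) * (x : ℝ) ^ 8 := by
  have hrad : (rad (x ^ 11 * b * y ^ 2).natAbs : ℝ) ≤ x * |(b : ℝ)| * |(y : ℝ)| := by
    calc (rad (x ^ 11 * b * y ^ 2).natAbs : ℝ) ≤ ((x * b * y).natAbs : ℝ) := by
          exact_mod_cast rad_natAbs_pow_mul_mul_pow_le 11 2 hxby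
      _ = x * |(b : ℝ)| * |(y : ℝ)| := by
          rw [Nat.cast_natAbs]
          push_cast
          rw [abs_mul, abs_mul, abs_of_nonneg (by exact_mod_cast hx)]
  have hsq : ((x : ℝ) * |(b : ℝ)| * |(y : ℝ)|) ^ 2 ≤ |(b : ℝ)| ^ 2 * x ^ 15 := by
    rw [mul_pow, mul_pow, sq_abs (y : ℝ)]
    calc (x : ℝ) ^ 2 * |(b : ℝ)| ^ 2 * y ^ 2 ≤ x ^ 2 * |(b : ℝ)| ^ 2 * x ^ 13 := by gcongr
      _ = |(b : ℝ)| ^ 2 * x ^ 15 := by ring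
  have hx' : (0 : ℝ) ≤ x := by exact_mod_cast hx
  calc (rad (x ^ 11 * b * y ^ 2).natAbs : ℝ) ^ (1 + (1 : ℝ) / 15)
      ≤ ((x : ℝ) * |(b : ℝ)| * |(y : ℝ)|) ^ (1 + (1 : ℝ) / 15) :=
        Real.rpow_le_rpow (by positivity) hrad (by norm_num)
    _ = (((x : ℝ) * |(b : ℝ)| * |(y : ℝ)|) ^ 2) ^ ((8 : ℝ) / 15) := by
        rw [← Real.rpow_natCast, ← Real.rpow_mul (by positivity)]
        norm_num
    _ ≤ (|(b : ℝ)| ^ 2 * x ^ 15) ^ ((8 : ℝ) / 15) :=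
        Real.rpow_le_rpow (by positivity) hsq (by norm_num)
    _ = |(b : ℝ)| ^ ((16 : ℝ) / 15) * (x : ℝ) ^ 8 := by
        rw [Real.mul_rpow (by positivity) (by positivity), ← Real.rpow_natCast |(b : ℝ)|,
          ← Real.rpow_natCast (x : ℝ), ← Real.rpow_mul (by positivity),
          ← Real.rpow_mul hx', ← Real.rpow_natCast (x : ℝ) 8]
        norm_num

theorem Int.not_dvd_of_natAbs_pow_sub_pow_eq_prime {ℓ m n : ℕ} {x y : ℤ} (hℓ : ℓ.Prime)
    (hm : 2 ≤ m) (hn : 2 ≤ n) (h : (y ^ m - x ^ n).natAbs = ℓ) : ¬ (ℓ : ℤ) ∣ x := by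
  intro hx
  have hℓdiff : (ℓ : ℤ) ∣ y ^ m - x ^ n := Int.ofNat_dvd_left.2 (h ▸ dvd_rfl)
  have hy : (ℓ : ℤ) ∣ y := (Nat.prime_iff_prime_int.mp hℓ).dvd_of_dvd_pow (n := m) <| by
    simpa using dvd_add hℓdiff (dvd_pow hx (by omega : n ≠ 0))
  have hsq : ((ℓ ^ 2 : ℕ) : ℤ) ∣ y ^ m - x ^ n := by
    push_cast
    exact dvd_sub ((pow_dvd_pow_of_dvd hy 2).trans (pow_dvd_pow y hm))
      ((pow_dvd_pow_of_dvd hx 2).trans (pow_dvd_pow x hn))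
  rw [Int.ofNat_dvd_left, h] at hsq
  have := (Nat.pow_dvd_pow_iff_le_right hℓ.one_lt).1 (by simpa using hsq : ℓ ^ 2 ∣ ℓ ^ 1)
  omega

def ABCHoldsWith (ε C : ℝ) : Prop :=
  ∀ a b c : ℤ, a ≠ 0 → b ≠ 0 → c ≠ 0 → IsCoprime a b → a + b = c →
    ((|c| : ℤ) : ℝ) ≤ C * (rad (a * b * c).natAbs : ℝ) ^ (1 + ε)

theorem pow_three_le_of_abcHoldsWith {C : ℝ} (hC : 0 ≤ C) (habc : ABCHoldsWith (1 / 15) C)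
    {ℓ : ℕ} {x y : ℤ} (hℓ : ℓ.Prime) (hx : 1 ≤ x) (hxy : (y ^ 2 - x ^ 11).natAbs = ℓ)
    (hlarge : 2 * (ℓ : ℝ) < (x : ℝ) ^ 11) :
    (x : ℝ) ^ 3 ≤ 2 * C * (ℓ : ℝ) ^ ((16 : ℝ) / 15) := by
  set b := y ^ 2 - x ^ 11 with hb
  have hbℓ : |(b : ℝ)| = ℓ := by rw [← hxy, Nat.cast_natAbs, Int.cast_abs]
  have hyb : (y : ℝ) ^ 2 = x ^ 11 + b := by push_cast [hb]; ring
  have hbprime : Prime b := Int.prime_iff_natAbs_prime.2 (hxy ▸ hℓ)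
  have hcop : IsCoprime (x ^ 11) b := by
    refine ((Prime.coprime_iff_not_dvd hbprime).2 ?_).symm.pow_left
    rw [← Int.natAbs_dvd, hxy]
    exact Int.not_dvd_of_natAbs_pow_sub_pow_eq_prime hℓ le_rfl (by norm_num) hxy
  have hx2 : (2 : ℝ) ≤ x := by
    have hx1 : x ≠ 1 := by
      rintro rfl
      have : (2 : ℝ) ≤ ℓ := by exact_mod_cast hℓ.two_le
      push_cast at hlarge
      linarith
    exact_mod_cast (by omega : (2 : ℤ) ≤ x)
  obtain ⟨hbl, hbu⟩ := abs_le.1 hbℓ.le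
  have hylow : (x : ℝ) ^ 11 < 2 * y ^ 2 := by linarith
  have hyup : (y : ℝ) ^ 2 ≤ x ^ 13 := by
    have : 4 * (x : ℝ) ^ 11 ≤ x ^ 2 * x ^ 11 :=
      mul_le_mul_of_nonneg_right (by nlinarith) (by positivity)
    nlinarith
  have hy : y ≠ 0 := by
    rintro rfl
    norm_num at hylow
    linarith [pow_pos (by linarith : (0 : ℝ) < x) 11]
  have hx0 : x ≠ 0 := by omega
  have habcxy := habc (x ^ 11) b (y ^ 2) (pow_ne_zero _ hx0) hbprime.ne_zero (pow_ne_zero _ hy)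
    hcop (by ring)
  rw [abs_of_nonneg (sq_nonneg y)] at habcxy
  push_cast at habcxy
  have hradpow := rad_rpow_le_of_sq_le_pow (b := b) (by omega)
    (by simp [hx0, hbprime.ne_zero, hy]) hyup
  rw [hbℓ] at hradpow
  have h8 : (x : ℝ) ^ 3 * x ^ 8 ≤ 2 * C * (ℓ : ℝ) ^ ((16 : ℝ) / 15) * x ^ 8 := by
    nlinarith [mul_le_mul_of_nonneg_left hradpow hC]
  exact le_of_mul_le_mul_right h8 (by positivity)

theorem le_add_one_mul_of_pow_le_mul_pow {x s c : ℝ} {n : ℕ} (hn : n ≠ 0) (hs : 0 ≤ s)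
    (hc : 0 ≤ c) (h : x ^ n ≤ c * s ^ n) : x ≤ (c + 1) * s := by
  by_contra! hlt
  have h1 : ((c + 1) * s) ^ n < x ^ n := pow_lt_pow_left₀ hlt (by positivity) hn
  have h2 : c + 1 ≤ (c + 1) ^ n := le_self_pow₀ (by linarith) hn
  rw [mul_pow] at h1
  nlinarith [pow_nonneg hs n]

theorem le_mul_pow_of_abcHoldsWith {C t : ℝ} (hC : 0 ≤ C) (habc : ABCHoldsWith (1 / 15) C)
    (ht : 1 ≤ t) {ℓ : ℕ} {x y : ℤ} (hℓ : ℓ.Prime) (hx : 1 ≤ x)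
    (hxy : (y ^ 2 - x ^ 11).natAbs = ℓ) (hℓt : (ℓ : ℝ) ≤ t ^ 22) :
    (x : ℝ) ≤ (2 * C + 3) * t ^ 13 := by
  have ht13 : 0 ≤ t ^ 13 := by positivity
  rcases lt_or_ge (2 * (ℓ : ℝ)) ((x : ℝ) ^ 11) with hlarge | hsmall
  · have h3 : (x : ℝ) ^ 3 ≤ 2 * C * (t ^ 13) ^ 3 := by
      calc (x : ℝ) ^ 3 ≤ 2 * C * (ℓ : ℝ) ^ ((16 : ℝ) / 15) :=
            pow_three_le_of_abcHoldsWith hC habc hℓ hx hxy hlarge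
        _ ≤ 2 * C * (t ^ 22) ^ ((16 : ℝ) / 15) := by gcongr
        _ ≤ 2 * C * (t ^ 13) ^ 3 := by
          gcongr
          rw [← Real.rpow_natCast t 22, ← Real.rpow_mul (by linarith), ← pow_mul,
            ← Real.rpow_natCast]
          exact Real.rpow_le_rpow_of_exponent_le ht (by norm_num)
    nlinarith [le_add_one_mul_of_pow_le_mul_pow (by norm_num) ht13 (by positivity) h3]
  · have h11 : (x : ℝ) ^ 11 ≤ 2 * (t ^ 13) ^ 11 := by
      calc (x : ℝ) ^ 11 ≤ 2 * ℓ := hsmall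
        _ ≤ 2 * t ^ 22 := by gcongr
        _ ≤ 2 * (t ^ 13) ^ 11 := by rw [← pow_mul]; gcongr; norm_num
    nlinarith [le_add_one_mul_of_pow_le_mul_pow (by norm_num) ht13 (by norm_num) h11]

theorem Real.sqrt_sub_sqrt_le_sqrt_sub {a b : ℝ} (h : b ≤ a) : √a - √b ≤ √(a - b) := by
  rcases le_total b 0 with hb | hb
  · rw [Real.sqrt_eq_zero'.2 hb, sub_zero]
    exact Real.sqrt_le_sqrt (by linarith)
  · have hba : √b ≤ √a := Real.sqrt_le_sqrt h
    rw [Real.le_sqrt (by linarith) (by linarith)]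
    nlinarith [Real.sq_sqrt hb, Real.sq_sqrt (hb.trans h), Real.sqrt_nonneg b]

theorem Real.sqrt_sub_sqrt_le_div {a b : ℝ} (hb : 0 ≤ b) (h : b < a) :
    √a - √b ≤ (a - b) / √a := by
  have ha : 0 < √a := Real.sqrt_pos.2 (hb.trans_lt h)
  rw [le_div_iff₀ ha]
  nlinarith [Real.mul_self_sqrt hb, Real.mul_self_sqrt (hb.trans h.le),
    mul_le_mul_of_nonneg_right (Real.sqrt_le_sqrt h.le) (Real.sqrt_nonneg b)]

theorem Nat.card_Icc_ceil_floor_le {a b : ℝ} (hb : 0 ≤ b) (hab : a ≤ b) :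
    ((Finset.Icc ⌈a⌉₊ ⌊b⌋₊).card : ℝ) ≤ b - a + 1 := by
  rw [Nat.card_Icc]
  rcases le_or_gt ⌈a⌉₊ (⌊b⌋₊ + 1) with h | h
  · rw [Nat.cast_sub h]
    push_cast
    linarith [Nat.floor_le hb, Nat.le_ceil a]
  · rw [Nat.sub_eq_zero_of_le h.le, Nat.cast_zero]
    linarith

theorem sqrt_add_sub_sqrt_sub_le_of_sq_lt {t x : ℝ} (ht : 0 < t) (hx : t ^ 2 < x) :
    √(x ^ 11 + t ^ 22) - √(x ^ 11 - t ^ 22) ≤ 2 * t ^ 15 * (x ^ 2)⁻¹ := by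
  have hx0 : 0 < x := (by positivity : (0 : ℝ) < t ^ 2).trans hx
  have hx7 : t ^ 14 < x ^ 7 := by
    rw [show t ^ 14 = (t ^ 2) ^ 7 by ring]
    exact pow_lt_pow_left₀ hx (by positivity) (by norm_num)
  have hx11 : t ^ 22 < x ^ 11 := by
    rw [show t ^ 22 = (t ^ 2) ^ 11 by ring]
    exact pow_lt_pow_left₀ hx (by positivity) (by norm_num)
  have hsqrt : t ^ 7 * x ^ 2 ≤ √(x ^ 11 + t ^ 22) := by
    rw [Real.le_sqrt (by positivity) (by positivity)]
    nlinarith [pow_pos hx0 4, pow_pos ht 22]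
  calc √(x ^ 11 + t ^ 22) - √(x ^ 11 - t ^ 22)
      ≤ ((x ^ 11 + t ^ 22) - (x ^ 11 - t ^ 22)) / √(x ^ 11 + t ^ 22) :=
        Real.sqrt_sub_sqrt_le_div (by linarith) (by linarith [pow_pos ht 22])
    _ ≤ 2 * t ^ 22 / (t ^ 7 * x ^ 2) := by
        rw [show (x ^ 11 + t ^ 22) - (x ^ 11 - t ^ 22) = 2 * t ^ 22 by ring]
        gcongr
    _ = 2 * t ^ 15 * (x ^ 2)⁻¹ := by field_simp

theorem sum_sqrt_add_sub_sqrt_sub_le {t : ℝ} (ht : 0 < t) (N : ℕ) :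
    ∑ x ∈ Finset.Icc 1 N, (√((x : ℝ) ^ 11 + t ^ 22) - √((x : ℝ) ^ 11 - t ^ 22))
      ≤ 6 * t ^ 13 := by
  set g : ℕ → ℝ := fun x => √((x : ℝ) ^ 11 + t ^ 22) - √((x : ℝ) ^ 11 - t ^ 22)
  rw [← Finset.sum_filter_add_sum_filter_not _ (fun x : ℕ => (x : ℝ) ≤ t ^ 2)]
  set small := (Finset.Icc 1 N).filter (fun x : ℕ => (x : ℝ) ≤ t ^ 2)
  set large := (Finset.Icc 1 N).filter (fun x : ℕ => ¬(x : ℝ) ≤ t ^ 2)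
  have hsmall : ∑ x ∈ small, g x ≤ 2 * t ^ 13 := by
    have hterm : ∀ x ∈ small, g x ≤ 2 * t ^ 11 := fun x _ =>
      calc g x ≤ √(2 * t ^ 22) :=
            (Real.sqrt_sub_sqrt_le_sqrt_sub (by linarith [pow_pos ht 22])).trans_eq
              (by ring_nf)
        _ ≤ 2 * t ^ 11 := (Real.sqrt_le_left (by positivity)).2 (by nlinarith [pow_pos ht 22])
    have hcard : (small.card : ℝ) ≤ t ^ 2 := by
      calc (small.card : ℝ) ≤ (Finset.Icc 1 ⌊t ^ 2⌋₊).card := by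
            refine Nat.cast_le.2 (Finset.card_le_card ?_)
            intro x hx
            simp only [small, Finset.mem_filter, Finset.mem_Icc] at hx ⊢
            exact ⟨hx.1.1, Nat.le_floor hx.2⟩
        _ ≤ t ^ 2 := by simpa using Nat.floor_le (by positivity : 0 ≤ t ^ 2)
    calc ∑ x ∈ small, g x ≤ small.card • (2 * t ^ 11) := Finset.sum_le_card_nsmul _ _ _ hterm
      _ ≤ t ^ 2 * (2 * t ^ 11) := by rw [nsmul_eq_mul]; gcongr
      _ = 2 * t ^ 13 := by ring
  have hlarge : ∑ x ∈ large, g x ≤ 4 * t ^ 13 := by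
    have hsub : large ⊆ Finset.Ioo ⌊t ^ 2⌋₊ (N + 1) := by
      intro x hx
      simp only [large, Finset.mem_filter, Finset.mem_Icc, not_le, Finset.mem_Ioo] at hx ⊢
      exact ⟨(Nat.floor_lt (by positivity)).2 hx.2, by omega⟩
    calc ∑ x ∈ large, g x ≤ ∑ x ∈ large, 2 * t ^ 15 * ((x : ℝ) ^ 2)⁻¹ := by
          refine Finset.sum_le_sum fun x hx => sqrt_add_sub_sqrt_sub_le_of_sq_lt ht ?_
          simpa [large] using (Finset.mem_filter.1 hx).2
      _ ≤ ∑ x ∈ Finset.Ioo ⌊t ^ 2⌋₊ (N + 1), 2 * t ^ 15 * ((x : ℝ) ^ 2)⁻¹ :=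
          Finset.sum_le_sum_of_subset_of_nonneg hsub fun _ _ _ => by positivity
      _ = 2 * t ^ 15 * ∑ x ∈ Finset.Ioo ⌊t ^ 2⌋₊ (N + 1), ((x : ℝ) ^ 2)⁻¹ :=
          (Finset.mul_sum _ _ _).symm
      _ ≤ 2 * t ^ 15 * (2 / (⌊t ^ 2⌋₊ + 1)) := by gcongr; exact sum_Ioo_inv_sq_le _ _
      _ ≤ 2 * t ^ 15 * (2 / t ^ 2) := by gcongr; exact (Nat.lt_floor_add_one _).le
      _ = 4 * t ^ 13 := by field_simp; ring
  linarith

-- The pairs `⟨x, y⟩` with `1 ≤ x ≤ N` and `|y² - x¹¹| ≤ X`; when `x¹¹ < X` the lower end of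
-- the `y`-range is `√` of a negative number, which is `0`.
noncomputable def closePairs (N : ℕ) (X : ℝ) : Finset (Σ _ : ℕ, ℕ) :=
  (Finset.Icc 1 N).sigma fun x => Finset.Icc ⌈√((x : ℝ) ^ 11 - X)⌉₊ ⌊√((x : ℝ) ^ 11 + X)⌋₊

theorem card_closePairs_le {t : ℝ} (ht : 0 < t) (N : ℕ) :
    ((closePairs N (t ^ 22)).card : ℝ) ≤ N + 6 * t ^ 13 := by
  rw [closePairs, Finset.card_sigma, Nat.cast_sum]
  calc ∑ x ∈ Finset.Icc 1 N,
        ((Finset.Icc ⌈√((x : ℝ) ^ 11 - t ^ 22)⌉₊ ⌊√((x : ℝ) ^ 11 + t ^ 22)⌋₊).card : ℝ)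
      ≤ ∑ x ∈ Finset.Icc 1 N, ((√((x : ℝ) ^ 11 + t ^ 22) - √((x : ℝ) ^ 11 - t ^ 22)) + 1) :=
        Finset.sum_le_sum fun x _ => Nat.card_Icc_ceil_floor_le (Real.sqrt_nonneg _)
          (Real.sqrt_le_sqrt (by linarith [pow_pos ht 22]))
    _ = ∑ x ∈ Finset.Icc 1 N, (√((x : ℝ) ^ 11 + t ^ 22) - √((x : ℝ) ^ 11 - t ^ 22)) + N := by
        rw [Finset.sum_add_distrib]; simp
    _ ≤ N + 6 * t ^ 13 := by linarith [sum_sqrt_add_sub_sqrt_sub_le ht N]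

theorem natAbs_mem_image_closePairs {B X : ℝ} {x y : ℤ} (hx : 1 ≤ x) (hxB : (x : ℝ) ≤ B)
    (hX : ((y ^ 2 - x ^ 11).natAbs : ℝ) ≤ X) :
    (y ^ 2 - x ^ 11).natAbs ∈
      (closePairs ⌊B⌋₊ X).image fun p => ((p.2 : ℤ) ^ 2 - (p.1 : ℤ) ^ 11).natAbs := by
  lift x to ℕ using (by omega)
  refine Finset.mem_image.2 ⟨⟨x, y.natAbs⟩, ?_, by simp⟩
  have hy : ((y.natAbs : ℕ) : ℝ) ^ 2 = (y : ℝ) ^ 2 := by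
    rw [Nat.cast_natAbs, Int.cast_abs, sq_abs]
  rw [Nat.cast_natAbs] at hX
  push_cast at hX
  have hX0 : 0 ≤ X := (abs_nonneg _).trans hX
  obtain ⟨h1, h2⟩ := abs_le.1 hX
  simp only [closePairs, Finset.mem_sigma, Finset.mem_Icc]
  refine ⟨⟨by exact_mod_cast hx, Nat.le_floor (by exact_mod_cast hxB)⟩, Nat.ceil_le.2 ?_,
    Nat.le_floor ?_⟩
  · exact (Real.sqrt_le_left (Nat.cast_nonneg _)).2 (by rw [hy]; linarith)
  · exact (Real.le_sqrt (Nat.cast_nonneg _) (by positivity)).2 (by rw [hy]; linarith)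

theorem ncard_le_card_closePairs {C t : ℝ} (hC : 0 ≤ C) (habc : ABCHoldsWith (1 / 15) C)
    (ht : 1 ≤ t) :
    Set.ncard {ℓ : ℕ | ℓ.Prime ∧ (ℓ : ℝ) ≤ t ^ 22 ∧
        ∃ x y : ℤ, 1 ≤ x ∧ (y ^ 2 = x ^ 11 + (ℓ : ℤ) ∨ y ^ 2 = x ^ 11 - (ℓ : ℤ))}
      ≤ (closePairs ⌊(2 * C + 3) * t ^ 13⌋₊ (t ^ 22)).card := by
  refine (Set.ncard_le_ncard (t := ↑((closePairs ⌊(2 * C + 3) * t ^ 13⌋₊ (t ^ 22)).image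
    fun p => ((p.2 : ℤ) ^ 2 - (p.1 : ℤ) ^ 11).natAbs)) ?_).trans
    ((Set.ncard_coe_finset _).trans_le Finset.card_image_le)
  rintro ℓ ⟨hℓ, hℓt, x, y, hx, hxy⟩
  have hxyℓ : (y ^ 2 - x ^ 11).natAbs = ℓ := by rcases hxy with h | h <;> simp [h]
  rw [Finset.mem_coe, ← hxyℓ]
  exact natAbs_mem_image_closePairs hx (le_mul_pow_of_abcHoldsWith hC habc ht hℓ hx hxyℓ hℓt)
    (hxyℓ ▸ hℓt)

theorem abc_implies_A2_bound (habc : ABCConjecture) :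
    ∃ C : ℝ, 0 < C ∧ ∀ X : ℝ, 2 ≤ X →
      (Set.ncard {ℓ : ℕ | ℓ.Prime ∧ (ℓ : ℝ) ≤ X ∧
          ∃ x y : ℤ, 1 ≤ x ∧ (y ^ 2 = x ^ 11 + (ℓ : ℤ) ∨ y ^ 2 = x ^ 11 - (ℓ : ℤ))} : ℝ)
        ≤ C * X ^ ((13 : ℝ) / 22) := by
  obtain ⟨C, hC, hCabc⟩ : ∃ C, 0 < C ∧ ABCHoldsWith (1 / 15) C := habc _ (by norm_num)
  refine ⟨2 * C + 9, by positivity, fun X hX => ?_⟩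
  obtain ⟨t, ht, rfl⟩ : ∃ t : ℝ, 1 ≤ t ∧ X = t ^ 22 :=
    ⟨X ^ ((1 : ℝ) / 22), Real.one_le_rpow (by linarith) (by norm_num),
      by rw [← Real.rpow_natCast, ← Real.rpow_mul (by linarith)]; norm_num⟩
  have ht13 : (t ^ 22) ^ ((13 : ℝ) / 22) = t ^ 13 := by
    rw [← Real.rpow_natCast, ← Real.rpow_mul (by linarith)]; norm_num
  calc _ ≤ ((closePairs ⌊(2 * C + 3) * t ^ 13⌋₊ (t ^ 22)).card : ℝ) := by
        exact_mod_cast ncard_le_card_closePairs hC.le hCabc ht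
    _ ≤ ⌊(2 * C + 3) * t ^ 13⌋₊ + 6 * t ^ 13 := card_closePairs_le (by linarith) _
    _ ≤ (2 * C + 3) * t ^ 13 + 6 * t ^ 13 := by gcongr; exact Nat.floor_le (by positivity)
    _ = (2 * C + 9) * (t ^ 22) ^ ((13 : ℝ) / 22) := by rw [ht13]; ring
end

section
/- Assume the abc Conjecture. Then for every real η > 0 there exists a constant C > 0 such that the following holds: for all real X ≥ 4 and all integers x ≥ 1 and u, if x > X^(1/11) and 1 ≤ |5·x^22 − u^2| ≤ 4X, then x ≤ C · X^(1/5 + η). -/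
/-!
Write `5x²² = (5x²² - u²) + u²` and apply abc after dividing out `g = gcd(5x²² - u², u²)`;
since `g ∣ 5x²² - u²`, it costs a factor `g ≤ 4X`. The radical divides `(5x²² - u²) · u · 5x`,
and `x²² > X² ≥ 4X` gives `|u| ≤ 3x¹¹`, so the radical is at most `60 X x¹²`. Hence
`x²² ≪ X^(2+ε) x^(12(1+ε))`, i.e. `x ≪ X^((2+ε)/(10-12ε))`, and `ε = η/(1+2η)` makes this
exponent at most `1/5 + η`.
-/

open Real

lemma rad_pos (n : ℕ) : 0 < rad n :=
  Finset.prod_pos fun _ hp => (Nat.prime_of_mem_primeFactors hp).pos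

lemma rad_le_of_dvd_pow {m k n : ℕ} (h : m ∣ k ^ n) (hk : k ≠ 0) : rad m ≤ k := by
  have hm : m ≠ 0 := by
    rintro rfl
    exact pow_ne_zero n hk (zero_dvd_iff.1 h)
  refine Nat.le_of_dvd (Nat.pos_of_ne_zero hk) ?_
  exact (Finset.prod_dvd_prod_of_subset _ _ _ ((Nat.exists_dvd_pow_iff hm hk).1 ⟨n, h⟩)).trans
    (Nat.prod_primeFactors_dvd k)

/-- Dividing out `gcd a b` gives a coprime triple with no larger radical. -/
theorem ABCConjecture.abs_le_gcd_mul_rad (habc : ABCConjecture) {ε : ℝ} (hε : 0 < ε) :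
    ∃ C : ℝ, 0 < C ∧ ∀ a b c : ℤ, a ≠ 0 → b ≠ 0 → a + b = c →
      ((|c| : ℤ) : ℝ) ≤ C * Int.gcd a b * (rad (a * b * c).natAbs : ℝ) ^ (1 + ε) := by
  obtain ⟨C, hC, hCabc⟩ := habc ε hε
  refine ⟨C, hC, fun a b c ha hb hsum => ?_⟩
  obtain ⟨g, a', b', hg, hcop, rfl, rfl⟩ := Int.exists_gcd_one' (Int.gcd_pos_of_ne_zero_left b ha)
  obtain rfl := hsum
  have hgcd : Int.gcd (a' * g) (b' * g) = g := by
    rw [Int.gcd_mul_right, hcop, one_mul, Int.natAbs_natCast]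
  rw [hgcd, show a' * g + b' * g = (a' + b') * g by ring]
  rcases eq_or_ne (a' + b') 0 with hc | hc
  · rw [hc, zero_mul, abs_zero, Int.cast_zero]
    positivity
  have hrad : rad (a' * b' * (a' + b')).natAbs ≤
      rad (a' * g * (b' * g) * ((a' + b') * g)).natAbs :=
    rad_le_rad_of_dvd (Int.natAbs_dvd_natAbs.2 ⟨g ^ 3, by ring⟩) (by simp [*, hg.ne'])
  have key := hCabc a' b' (a' + b') (left_ne_zero_of_mul ha) (left_ne_zero_of_mul hb) hc
    (Int.isCoprime_iff_gcd_eq_one.2 hcop) rfl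
  calc ((|(a' + b') * g| : ℤ) : ℝ) = g * ((|a' + b'| : ℤ) : ℝ) := by
        push_cast [abs_mul, Nat.abs_cast]; ring
    _ ≤ g * (C * (rad (a' * b' * (a' + b')).natAbs : ℝ) ^ (1 + ε)) := by gcongr
    _ ≤ C * g * (rad (a' * g * (b' * g) * ((a' + b') * g)).natAbs : ℝ) ^ (1 + ε) := by
      rw [mul_left_comm, ← mul_assoc]
      gcongr

lemma le_rpow_inv_of_rpow_le_mul_rpow {t A m n : ℝ} (ht : 0 < t) (hA : 0 ≤ A) (hmn : m < n)
    (h : t ^ n ≤ A * t ^ m) : t ≤ A ^ (n - m)⁻¹ := by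
  rw [Real.le_rpow_inv_iff_of_pos ht.le hA (sub_pos.2 hmn), Real.rpow_sub ht,
    div_le_iff₀ (Real.rpow_pos_of_pos ht m)]
  exact h

lemma le_mul_rpow_of_pow_le {t X C ε : ℝ} (ht : 0 < t) (hX : 0 < X) (hC : 0 ≤ C)
    (hε : ε < 5 / 6)
    (h : 5 * t ^ 22 ≤ C * (4 * X) * (60 * X * t ^ 12) ^ (1 + ε)) :
    t ≤ (4 / 5 * C * 60 ^ (1 + ε)) ^ (10 - 12 * ε)⁻¹ * X ^ ((2 + ε) / (10 - 12 * ε)) := by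
  have hK : 0 ≤ 4 / 5 * C * (60 : ℝ) ^ (1 + ε) := by positivity
  have h' : t ^ (22 : ℝ) ≤ (4 / 5 * C * 60 ^ (1 + ε) * X ^ (2 + ε)) * t ^ (12 * (1 + ε)) := by
    rw [Real.mul_rpow (by positivity) (by positivity), Real.mul_rpow (by norm_num) hX.le,
      ← Real.rpow_natCast t 12, ← Real.rpow_mul ht.le] at h
    rw [show (2 + ε) = 1 + (1 + ε) by ring, Real.rpow_add hX, Real.rpow_one,
      show (22 : ℝ) = (22 : ℕ) by norm_num, Real.rpow_natCast]
    push_cast at h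
    linarith
  have hlt := le_rpow_inv_of_rpow_le_mul_rpow ht (by positivity) (by linarith) h'
  rwa [show (22 : ℝ) - 12 * (1 + ε) = 10 - 12 * ε by ring, Real.mul_rpow hK (by positivity),
    ← Real.rpow_mul hX.le, ← div_eq_mul_inv] at hlt

lemma four_mul_lt_pow_twentytwo {X t : ℝ} (hX : 4 ≤ X) (ht : X ^ ((1 : ℝ) / 11) < t) :
    4 * X < t ^ 22 := by
  have hX11 : X < t ^ 11 := by
    have := pow_lt_pow_left₀ ht (by positivity) (by norm_num : (11 : ℕ) ≠ 0)
    rwa [← Real.rpow_natCast, ← Real.rpow_mul (by linarith), Nat.cast_ofNat,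
      one_div_mul_cancel (by norm_num), Real.rpow_one] at this
  nlinarith

lemma exists_pos_div_sub_le {η : ℝ} (hη : 0 < η) :
    ∃ ε : ℝ, 0 < ε ∧ ε < 5 / 6 ∧ (2 + ε) / (10 - 12 * ε) ≤ 1 / 5 + η := by
  have hε_mul : η / (1 + 2 * η) * (1 + 2 * η) = η := div_mul_cancel₀ η (by positivity)
  have hε_lt : η / (1 + 2 * η) < 5 / 6 := by rw [div_lt_iff₀ (by positivity)]; linarith
  refine ⟨η / (1 + 2 * η), by positivity, hε_lt, ?_⟩
  rw [div_le_iff₀ (by linarith)]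
  nlinarith

section

variable {X : ℝ} {x u : ℤ}

lemma abs_le_three_mul_pow_eleven (hx : 0 ≤ x) (hxX : 4 * X < (x : ℝ) ^ 22)
    (h : ((|5 * x ^ 22 - u ^ 2| : ℤ) : ℝ) ≤ 4 * X) : |(u : ℝ)| ≤ 3 * (x : ℝ) ^ 11 := by
  push_cast at h
  refine abs_le_of_sq_le_sq ?_ (by positivity)
  nlinarith [neg_abs_le (5 * (x : ℝ) ^ 22 - (u : ℝ) ^ 2), pow_nonneg (sq_nonneg (x : ℝ)) 11]

lemma ne_zero_of_abs_sub_le (hxX : 4 * X < (x : ℝ) ^ 22)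
    (h : ((|5 * x ^ 22 - u ^ 2| : ℤ) : ℝ) ≤ 4 * X) : u ≠ 0 := by
  rintro rfl
  push_cast at h
  rw [sub_zero] at h
  nlinarith [le_abs_self (5 * (x : ℝ) ^ 22), pow_nonneg (sq_nonneg (x : ℝ)) 11]

lemma rad_le_of_abs_sub_le (hx : 1 ≤ x) (hxX : 4 * X < (x : ℝ) ^ 22)
    (h1 : 1 ≤ |5 * x ^ 22 - u ^ 2|) (h : ((|5 * x ^ 22 - u ^ 2| : ℤ) : ℝ) ≤ 4 * X) :
    (rad ((5 * x ^ 22 - u ^ 2) * u ^ 2 * (5 * x ^ 22)).natAbs : ℝ) ≤ 60 * X * (x : ℝ) ^ 12 := by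
  have hx0 : (0 : ℝ) < x := by exact_mod_cast hx
  have hu := ne_zero_of_abs_sub_le hxX h
  have hk : (5 * x ^ 22 - u ^ 2) * u * (5 * x) ≠ 0 :=
    mul_ne_zero (mul_ne_zero (abs_pos.1 h1) hu) (by omega)
  have hdvd : (5 * x ^ 22 - u ^ 2) * u ^ 2 * (5 * x ^ 22) ∣
      ((5 * x ^ 22 - u ^ 2) * u * (5 * x)) ^ 22 :=
    ⟨(5 * x ^ 22 - u ^ 2) ^ 21 * u ^ 20 * 5 ^ 21, by ring⟩
  have hrad : rad ((5 * x ^ 22 - u ^ 2) * u ^ 2 * (5 * x ^ 22)).natAbs ≤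
      ((5 * x ^ 22 - u ^ 2) * u * (5 * x)).natAbs := by
    refine rad_le_of_dvd_pow (n := 22) ?_ (Int.natAbs_ne_zero.2 hk)
    rw [← Int.natAbs_pow]
    exact Int.natAbs_dvd_natAbs.2 hdvd
  have hrad_le : (rad ((5 * x ^ 22 - u ^ 2) * u ^ 2 * (5 * x ^ 22)).natAbs : ℝ)
      ≤ ((|5 * x ^ 22 - u ^ 2| : ℤ) : ℝ) * |(u : ℝ)| * (5 * x) := by
    refine (Nat.cast_le.2 hrad).trans_eq ?_
    rw [Nat.cast_natAbs, Int.cast_abs]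
    push_cast
    rw [abs_mul, abs_mul, abs_of_pos (by positivity : (0 : ℝ) < 5 * x)]
  have hfactors : ((|5 * x ^ 22 - u ^ 2| : ℤ) : ℝ) * |(u : ℝ)| * (5 * x)
      ≤ 4 * X * (3 * (x : ℝ) ^ 11) * (5 * x) := by
    have hX : 0 ≤ 4 * X := (Int.cast_nonneg (abs_nonneg _)).trans h
    gcongr
    exact abs_le_three_mul_pow_eleven (by omega) hxX h
  linarith

end

theorem abc_implies_x_bound_E4 (habc : ABCConjecture) :
    ∀ η : ℝ, 0 < η → ∃ C : ℝ, 0 < C ∧ ∀ X : ℝ, 4 ≤ X → ∀ x u : ℤ, 1 ≤ x →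
      X ^ ((1 : ℝ) / 11) < (x : ℝ) →
      1 ≤ |5 * x ^ 22 - u ^ 2| → ((|5 * x ^ 22 - u ^ 2| : ℤ) : ℝ) ≤ 4 * X →
      (x : ℝ) ≤ C * X ^ ((1 : ℝ) / 5 + η) := by
  intro η hη
  obtain ⟨ε, hε, hε_lt, hexp⟩ := exists_pos_div_sub_le hη
  obtain ⟨C, hC, hCabc⟩ := habc.abs_le_gcd_mul_rad hε
  refine ⟨(4 / 5 * C * 60 ^ (1 + ε)) ^ (10 - 12 * ε)⁻¹, by positivity, ?_⟩
  intro X hX x u hx hxX h1 h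
  have hx0 : (0 : ℝ) < x := by exact_mod_cast hx
  have hxX' := four_mul_lt_pow_twentytwo hX hxX
  have hgcd : (Int.gcd (5 * x ^ 22 - u ^ 2) (u ^ 2) : ℝ) ≤ 4 * X := by
    refine le_trans ?_ h
    have hle := Int.gcd_le_natAbs_left (u ^ 2) (abs_pos.1 h1)
    rw [← Int.natCast_natAbs, Int.cast_natCast]
    exact_mod_cast hle
  have hbound : 5 * (x : ℝ) ^ 22 ≤ C * (4 * X) * (60 * X * (x : ℝ) ^ 12) ^ (1 + ε) := by
    have habc' := hCabc (5 * x ^ 22 - u ^ 2) (u ^ 2) (5 * x ^ 22) (abs_pos.1 h1)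
      (pow_ne_zero 2 (ne_zero_of_abs_sub_le hxX' h)) (by ring)
    calc 5 * (x : ℝ) ^ 22 = ((|5 * x ^ 22| : ℤ) : ℝ) := by
          rw [abs_of_pos (by positivity)]; push_cast; ring
      _ ≤ _ := habc'
      _ ≤ _ := by gcongr; exact rad_le_of_abs_sub_le hx hxX' h1 h
  calc (x : ℝ) ≤ (4 / 5 * C * 60 ^ (1 + ε)) ^ (10 - 12 * ε)⁻¹ * X ^ ((2 + ε) / (10 - 12 * ε)) :=
        le_mul_rpow_of_pow_le hx0 (by linarith) hC.le hε_lt hbound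
    _ ≤ _ := by gcongr; linarith
end

section
/- There exists a constant C > 0 such that for all real X ≥ 2, the number of pairs (x, u) of integers with 1 ≤ x ≤ X^(1/11), and 1 ≤ |5·x^22 − u^2| ≤ 4X is at most C · X^(6/11). -/
/-!
For fixed `x` the admissible `u` satisfy `√(5x²² - 4X) ≤ |u| ≤ √(5x²² + 4X)`, and this shell has
width at most `8X / √(5x²² + 4X) ≤ min (4√X) (8X / x¹¹)`. Summing over `x ≤ X^(1/11)`, the first
bound for `x ≤ X^(1/22)` and the second (with `∑ 1/x²` over `x > X^(1/22)`) beyond, each part is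
`O(X^(6/11))`; rounding to integers costs `O(1)` per `x`, i.e. `O(X^(1/11))` in total.
-/

open Real Finset

theorem sqrt_add_sub_sqrt_sub_le {N H : ℝ} (hH : 0 ≤ H) :
    √(N + H) - √(N - H) ≤ 2 * H / √(N + H) := by
  rcases le_or_gt (N + H) 0 with hA | hA
  · simp [Real.sqrt_eq_zero'.mpr hA, Real.sqrt_eq_zero'.mpr (by linarith : N - H ≤ 0)]
  have hsA := Real.sqrt_pos.mpr hA
  rw [le_div_iff₀ hsA, sub_mul, Real.mul_self_sqrt hA.le]
  rcases le_or_gt (N - H) 0 with hB | hB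
  · nlinarith [Real.sqrt_nonneg (N - H)]
  · nlinarith [Real.mul_self_sqrt hB.le, Real.sqrt_le_sqrt (by linarith : N - H ≤ N + H),
      Real.sqrt_nonneg (N - H)]

theorem toNat_floor_add_one_sub_ceil_le {α β : ℝ} (h : α ≤ β) :
    (((⌊β⌋ + 1 - ⌈α⌉).toNat : ℕ) : ℝ) ≤ β - α + 1 := by
  rcases le_or_gt (⌊β⌋ + 1 - ⌈α⌉) 0 with hn | hn
  · simp only [Int.toNat_of_nonpos hn, Nat.cast_zero]
    linarith
  · rw [← Int.cast_natCast, Int.toNat_of_nonneg hn.le]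
    push_cast
    linarith [Int.floor_le β, Int.le_ceil α]

/-- The integers `u` with `√(N - H) ≤ |u| ≤ √(N + H)`; for `N < H`, `√(N - H) = 0` and only the
upper bound remains. -/
noncomputable def sqrtShell (N H : ℝ) : Finset ℤ :=
  Icc ⌈√(N - H)⌉ ⌊√(N + H)⌋ ∪ Icc (-⌊√(N + H)⌋) (-⌈√(N - H)⌉)

theorem mem_sqrtShell_of_abs_sub_sq_le {N H : ℝ} {u : ℤ} (h : |N - u ^ 2| ≤ H) :
    u ∈ sqrtShell N H := by
  rw [abs_le] at h
  have hlo : √(N - H) ≤ |(u : ℝ)| := by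
    rw [← Real.sqrt_sq_eq_abs]
    exact Real.sqrt_le_sqrt (by linarith)
  have hhi : |(u : ℝ)| ≤ √(N + H) := Real.abs_le_sqrt (by linarith)
  simp only [sqrtShell, mem_union, mem_Icc]
  rcases le_or_gt 0 u with hu | hu
  · rw [abs_of_nonneg (by exact_mod_cast hu)] at hlo hhi
    exact Or.inl ⟨Int.ceil_le.mpr hlo, Int.le_floor.mpr hhi⟩
  · rw [abs_of_neg (by exact_mod_cast hu)] at hlo hhi
    exact Or.inr ⟨neg_le.mp (Int.le_floor.mpr (by push_cast; exact hhi)),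
      le_neg.mp (Int.ceil_le.mpr (by push_cast; exact hlo))⟩

theorem card_sqrtShell_le {N H : ℝ} (hH : 0 ≤ H) :
    (#(sqrtShell N H) : ℝ) ≤ 4 * H / √(N + H) + 2 := by
  have hcard : #(sqrtShell N H) ≤ 2 * (⌊√(N + H)⌋ + 1 - ⌈√(N - H)⌉).toNat := by
    refine (card_union_le _ _).trans_eq ?_
    rw [Int.card_Icc, Int.card_Icc, two_mul]
    congr 2
    ring
  calc (#(sqrtShell N H) : ℝ)
      ≤ 2 * (((⌊√(N + H)⌋ + 1 - ⌈√(N - H)⌉).toNat : ℕ) : ℝ) := by exact_mod_cast hcard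
    _ ≤ 2 * (√(N + H) - √(N - H) + 1) := by
        gcongr
        exact toNat_floor_add_one_sub_ceil_le (Real.sqrt_le_sqrt (by linarith))
    _ ≤ 2 * (2 * H / √(N + H) + 1) := by gcongr; exact sqrt_add_sub_sqrt_sub_le hH
    _ = 4 * H / √(N + H) + 2 := by ring

theorem card_sqrtShell_le_min {N H y : ℝ} (hH : 0 < H) (hy : 0 < y) (hN : y ^ 2 ≤ N) :
    (#(sqrtShell N H) : ℝ) ≤ min (4 * √H) (4 * H / y) + 2 := by
  have hsH := Real.sqrt_pos.mpr hH
  refine (card_sqrtShell_le hH.le).trans (add_le_add_left (le_min ?_ ?_) 2)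
  · calc 4 * H / √(N + H) ≤ 4 * H / √H := by gcongr; linarith [sq_nonneg y]
      _ = 4 * √H := by rw [div_eq_iff hsH.ne', mul_assoc, Real.mul_self_sqrt hH.le]
  · calc 4 * H / √(N + H) ≤ 4 * H / √(y ^ 2) := by gcongr; nlinarith
      _ = 4 * H / y := by rw [Real.sqrt_sq hy.le]

theorem ncard_le_sum_card_sqrtShell {S : Set (ℤ × ℤ)} (f : ℤ → ℝ) {Y H : ℝ}
    (hS : ∀ p ∈ S, 1 ≤ p.1 ∧ (p.1 : ℝ) ≤ Y ∧ |f p.1 - p.2 ^ 2| ≤ H) :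
    (S.ncard : ℝ) ≤ ∑ n ∈ Icc 1 ⌊Y⌋₊, (#(sqrtShell (f n) H) : ℝ) := by
  set T := (Icc 1 ⌊Y⌋₊).biUnion fun n => {(n : ℤ)} ×ˢ sqrtShell (f n) H
  have hST : S ⊆ T := by
    rintro ⟨x, u⟩ hxu
    obtain ⟨hx1, hxY, hfu⟩ := hS _ hxu
    lift x to ℕ using by omega
    rw [mem_coe, mem_biUnion]
    exact ⟨x, mem_Icc.mpr ⟨by omega, Nat.le_floor hxY⟩,
      mem_product.mpr ⟨mem_singleton_self _, mem_sqrtShell_of_abs_sub_sq_le hfu⟩⟩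
  have hT : #T ≤ ∑ n ∈ Icc 1 ⌊Y⌋₊, #(sqrtShell (f n) H) :=
    card_biUnion_le.trans_eq (sum_congr rfl fun n _ => by rw [card_product, card_singleton, one_mul])
  calc (S.ncard : ℝ) ≤ #T := by
        exact_mod_cast (Set.ncard_le_ncard hST T.finite_toSet).trans_eq (Set.ncard_coe_finset T)
    _ ≤ _ := by exact_mod_cast hT

theorem sum_Icc_min_div_pow_le {a b t : ℝ} (ha : 0 ≤ a) (hb : 0 ≤ b) (ht : 0 < t) (p M : ℕ) :
    ∑ n ∈ Icc 1 M, min a (b / (n : ℝ) ^ (p + 2)) ≤ a * t + 2 * b / t ^ (p + 1) := by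
  set k := ⌊t⌋₊
  have hk : (k : ℝ) ≤ t := Nat.floor_le ht.le
  have hk1 : t < k + 1 := Nat.lt_floor_add_one t
  rw [← sum_filter_add_sum_filter_not _ (· ≤ k)]
  have head : ∑ n ∈ Icc 1 M with n ≤ k, min a (b / (n : ℝ) ^ (p + 2)) ≤ a * t := by
    have hcard : #{n ∈ Icc 1 M | n ≤ k} ≤ k :=
      (card_le_card fun n hn => by simp only [mem_filter, mem_Icc] at hn ⊢; omega).trans
        (Nat.card_Icc 1 k).le
    calc _ ≤ ∑ n ∈ Icc 1 M with n ≤ k, a := sum_le_sum fun _ _ => min_le_left _ _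
      _ = #{n ∈ Icc 1 M | n ≤ k} * a := by rw [sum_const, nsmul_eq_mul]
      _ ≤ t * a := by gcongr; exact (Nat.cast_le.mpr hcard).trans hk
      _ = a * t := mul_comm _ _
  have tail :
      ∑ n ∈ Icc 1 M with ¬n ≤ k, min a (b / (n : ℝ) ^ (p + 2)) ≤ 2 * b / t ^ (p + 1) := by
    have hterm : ∀ n ∈ Ioo k (M + 1), b / (n : ℝ) ^ (p + 2) ≤ b / t ^ p * ((n : ℝ) ^ 2)⁻¹ := by
      intro n hn
      have htn : t ≤ n := hk1.le.trans (by exact_mod_cast (mem_Ioo.mp hn).1)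
      have hn0 : (0 : ℝ) < n := ht.trans_le htn
      rw [← div_eq_mul_inv, div_div, pow_add]
      gcongr
    calc _ ≤ ∑ n ∈ Icc 1 M with ¬n ≤ k, b / (n : ℝ) ^ (p + 2) :=
          sum_le_sum fun _ _ => min_le_right _ _
      _ ≤ ∑ n ∈ Ioo k (M + 1), b / (n : ℝ) ^ (p + 2) :=
          sum_le_sum_of_subset_of_nonneg
            (fun n hn => by simp only [mem_filter, mem_Icc, mem_Ioo] at hn ⊢; omega)
            (fun _ _ _ => by positivity)
      _ ≤ ∑ n ∈ Ioo k (M + 1), b / t ^ p * ((n : ℝ) ^ 2)⁻¹ := sum_le_sum hterm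
      _ ≤ b / t ^ p * (2 / (k + 1)) := by
          rw [← mul_sum]
          gcongr
          exact sum_Ioo_inv_sq_le k (M + 1)
      _ ≤ b / t ^ p * (2 / t) := by gcongr
      _ = 2 * b / t ^ (p + 1) := by field_simp; ring
  exact add_le_add head tail

theorem sum_card_sqrtShell_five_pow_le {X : ℝ} (hX : 0 < X) (M : ℕ) :
    ∑ n ∈ Icc 1 M, (#(sqrtShell (5 * (n : ℝ) ^ 22) (4 * X)) : ℝ)
      ≤ 40 * X ^ ((6 : ℝ) / 11) + 2 * M := by
  set t := X ^ ((1 : ℝ) / 22)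
  have hfiber : ∀ n ∈ Icc 1 M, (#(sqrtShell (5 * (n : ℝ) ^ 22) (4 * X)) : ℝ)
      ≤ min (4 * √(4 * X)) (4 * (4 * X) / (n : ℝ) ^ (9 + 2)) + 2 := by
    intro n hn
    have hn0 : (0 : ℝ) < n := by exact_mod_cast (mem_Icc.mp hn).1
    exact card_sqrtShell_le_min (by positivity) (pow_pos hn0 11)
      (by norm_num [← pow_mul]; linarith [pow_pos hn0 22])
  have hsum := sum_Icc_min_div_pow_le (a := 4 * √(4 * X)) (b := 4 * (4 * X))
    (by positivity) (by positivity) (by positivity : 0 < t) 9 M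
  have hhead : 4 * √(4 * X) * t = 8 * X ^ ((6 : ℝ) / 11) := by
    have h4 : √(4 : ℝ) = 2 := by rw [show (4 : ℝ) = 2 ^ 2 by norm_num, Real.sqrt_sq zero_le_two]
    rw [Real.sqrt_mul zero_le_four, h4, Real.sqrt_eq_rpow, mul_assoc, mul_assoc,
      ← Real.rpow_add hX]
    norm_num
    ring
  have htail : 2 * (4 * (4 * X)) / t ^ (9 + 1) = 32 * X ^ ((6 : ℝ) / 11) := by
    rw [div_eq_iff (by positivity), ← Real.rpow_natCast, ← Real.rpow_mul hX.le, mul_assoc,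
      ← Real.rpow_add hX]
    norm_num
    ring
  calc _ ≤ ∑ n ∈ Icc 1 M, (min (4 * √(4 * X)) (4 * (4 * X) / (n : ℝ) ^ (9 + 2)) + 2) :=
        sum_le_sum hfiber
    _ = ∑ n ∈ Icc 1 M, min (4 * √(4 * X)) (4 * (4 * X) / (n : ℝ) ^ (9 + 2)) + 2 * M := by
        rw [sum_add_distrib, sum_const, Nat.card_Icc, Nat.add_sub_cancel, nsmul_eq_mul,
          mul_comm (M : ℝ)]
    _ ≤ 40 * X ^ ((6 : ℝ) / 11) + 2 * M := by linarith

theorem small_x_pairs_bound_E4 :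
    ∃ C : ℝ, 0 < C ∧ ∀ X : ℝ, 2 ≤ X →
      (Set.ncard {p : ℤ × ℤ | 1 ≤ p.1 ∧ (p.1 : ℝ) ≤ X ^ ((1 : ℝ) / 11) ∧
          1 ≤ |5 * p.1 ^ 22 - p.2 ^ 2| ∧ ((|5 * p.1 ^ 22 - p.2 ^ 2| : ℤ) : ℝ) ≤ 4 * X} : ℝ)
        ≤ C * X ^ ((6 : ℝ) / 11) := by
  refine ⟨42, by norm_num, fun X hX => ?_⟩
  have hX0 : 0 < X := by linarith
  have hcount := ncard_le_sum_card_sqrtShell (fun x : ℤ => 5 * (x : ℝ) ^ 22) (H := 4 * X)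
    (S := {p : ℤ × ℤ | 1 ≤ p.1 ∧ (p.1 : ℝ) ≤ X ^ ((1 : ℝ) / 11) ∧
      1 ≤ |5 * p.1 ^ 22 - p.2 ^ 2| ∧ ((|5 * p.1 ^ 22 - p.2 ^ 2| : ℤ) : ℝ) ≤ 4 * X})
    (fun p ⟨hx1, hxY, _, hxu⟩ => ⟨hx1, hxY, by exact_mod_cast hxu⟩)
  have hM : (⌊X ^ ((1 : ℝ) / 11)⌋₊ : ℝ) ≤ X ^ ((6 : ℝ) / 11) :=
    (Nat.floor_le (by positivity)).trans
      (Real.rpow_le_rpow_of_exponent_le (by linarith) (by norm_num))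
  have hsum := sum_card_sqrtShell_five_pow_le hX0 ⌊X ^ ((1 : ℝ) / 11)⌋₊
  simp only [Int.cast_natCast] at hcount
  linarith
end

section
/- Assume the abc Conjecture. Then for every real η > 0 there exists a constant C > 0 such that for all real X ≥ 4, the total number of pairs (x, u) of integers with x ≥ 1 and 1 ≤ |5·x^22 − u^2| ≤ 4X is at most C · (X^(6/11) + X^(1/5 + η)). -/
open Real

/-! Put `c = 5x²² - u²`, so `1 ≤ |c| ≤ 4X`. If `x²² > X`, then `|u| ≤ 3x¹¹`, and dividing
`5x²² = u² + c` by `g = gcd(5x²², u²)` gives a coprime abc triple with `g ≤ |c|` and radical at most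
`5x|u||c| ≤ 60x¹²X`; abc yields `x^(10-12ε) ≪ X^(2+ε)`, that is `x ≪ X^(1/5+η)` for
`ε = 50η/(17+60η)`. For fixed `x` the admissible `u` satisfy `√(5x²²-4X) ≤ |u| ≤ √(5x²²+4X)`, an
interval of length `≪ min(√X, X/x¹¹)`. With `t = X^(1/22)` the lengths sum to `≪ t¹² = X^(6/11)`,
and the `O(1)` rounding errors to `≪ X^(1/5+η)`. -/

open UniqueFactorizationMonoid

lemma rad_eq_radical (n : ℕ) : rad n = radical n := Nat.radical_eq_prod_primeFactors.symm

lemma radical_mul_pow_mul_pow_mul_dvd {M : Type*} [CommMonoidWithZero M] [NormalizationMonoid M]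
    [UniqueFactorizationMonoid M] (a x u c : M) (m n : ℕ) :
    radical (a * x ^ m * u ^ n * c) ∣ a * x * u * c := by
  have hpow {y : M} {k : ℕ} : radical (y ^ k) ∣ y := radical_pow_dvd.trans radical_dvd_self
  exact radical_mul_dvd.trans (mul_dvd_mul (radical_mul_dvd.trans (mul_dvd_mul
    (radical_mul_dvd.trans (mul_dvd_mul radical_dvd_self hpow)) hpow)) radical_dvd_self)

lemma rad_natAbs_mul_pow_mul_pow_mul_le (a x u c : ℤ) (m n : ℕ) (h : a * x * u * c ≠ 0) :
    rad (a * x ^ m * u ^ n * c).natAbs ≤ (a * x * u * c).natAbs := by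
  rw [rad_eq_radical]
  refine Nat.le_of_dvd (Int.natAbs_pos.2 h) ?_
  simpa only [Int.natAbs_mul, Int.natAbs_pow] using
    radical_mul_pow_mul_pow_mul_dvd a.natAbs x.natAbs u.natAbs c.natAbs m n

theorem ABCConjecture.exists_abs_le (habc : ABCConjecture) {ε : ℝ} (hε : 0 < ε) :
    ∃ C > 0, ∀ A B : ℤ, A ≠ 0 → B ≠ 0 → A ≠ B →
      |(A : ℝ)| ≤ C * |(A : ℝ) - B| * (rad (A * B * (A - B)).natAbs : ℝ) ^ (1 + ε) := by
  obtain ⟨C, hC, H⟩ := habc ε hε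
  refine ⟨C, hC, fun A B hA hB hAB => ?_⟩
  obtain ⟨g, a, b, hg, hab, rfl, rfl⟩ := Int.exists_gcd_one' (Int.gcd_pos_of_ne_zero_left B hA)
  have ha : a ≠ 0 := left_ne_zero_of_mul hA
  have hb : b ≠ 0 := left_ne_zero_of_mul hB
  have hc : a - b ≠ 0 := sub_ne_zero.2 fun h => hAB (by rw [h])
  have hcop : IsCoprime (a - b) b := by
    simpa using (IsCoprime.sub_mul_left_left_iff (z := 1)).2 (Int.isCoprime_iff_gcd_eq_one.2 hab)
  have habc' := H (a - b) b a hc hb ha hcop (by ring)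
  have hrad : rad ((a - b) * b * a).natAbs ≤ rad (a * g * (b * g) * (a * g - b * g)).natAbs := by
    rw [rad_eq_radical, rad_eq_radical]
    refine Nat.le_of_dvd (Nat.pos_of_ne_zero radical_ne_zero) (radical_dvd_radical ?_ ?_)
    · exact Int.natAbs_dvd_natAbs.2 ⟨g ^ 3, by ring⟩
    · simpa [ha, hb, hg.ne', sub_eq_zero] using hc
  have hg_le : (g : ℝ) ≤ |(a * g : ℝ) - b * g| := by
    rw [← sub_mul, abs_mul, Nat.abs_cast]
    refine le_mul_of_one_le_left (by positivity) ?_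
    exact_mod_cast Int.one_le_abs hc
  push_cast at habc' ⊢
  calc |(a : ℝ) * g| = |(a : ℝ)| * g := by rw [abs_mul, Nat.abs_cast]
    _ ≤ C * (rad ((a - b) * b * a).natAbs : ℝ) ^ (1 + ε) * |(a * g : ℝ) - b * g| :=
        mul_le_mul habc' hg_le (by positivity) (by positivity)
    _ ≤ C * |(a * g : ℝ) - b * g| *
          (rad (a * g * (b * g) * (a * g - b * g)).natAbs : ℝ) ^ (1 + ε) := by
        rw [mul_right_comm]; gcongr

theorem ABCConjecture.exists_pow_le_of_abs_five_mul_pow_sub_sq_le (habc : ABCConjecture) {ε : ℝ}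
    (hε : 0 < ε) :
    ∃ K > 0, ∀ X : ℝ, ∀ x u : ℤ, 1 ≤ x → X < (x : ℝ) ^ 22 → 1 ≤ |5 * x ^ 22 - u ^ 2| →
      ((|5 * x ^ 22 - u ^ 2| : ℤ) : ℝ) ≤ 4 * X →
      (x : ℝ) ^ 22 ≤ K * X * ((x : ℝ) ^ 12 * X) ^ (1 + ε) := by
  obtain ⟨C, hC, H⟩ := habc.exists_abs_le hε
  refine ⟨4 / 5 * C * 60 ^ (1 + ε), by positivity, fun X x u hx hxX h1 h2 => ?_⟩
  have hx0 : (0 : ℝ) < x := by exact_mod_cast hx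
  have h1' : (1 : ℝ) ≤ |5 * (x : ℝ) ^ 22 - u ^ 2| := by exact_mod_cast h1
  push_cast at h2
  have hX : 0 ≤ X := by linarith
  have hu : u ≠ 0 := by
    rintro rfl
    rw [Int.cast_zero, zero_pow two_ne_zero, sub_zero, abs_of_pos (by positivity)] at h2
    linarith
  have hu_le : |(u : ℝ)| ≤ 3 * (x : ℝ) ^ 11 := by
    rw [← sq_le_sq₀ (abs_nonneg _) (by positivity), sq_abs]
    nlinarith [(abs_le.1 h2).1]
  have hrad : (rad (5 * x ^ 22 * u ^ 2 * (5 * x ^ 22 - u ^ 2)).natAbs : ℝ) ≤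
      60 * (x : ℝ) ^ 12 * X := by
    have hne : 5 * x * u * (5 * x ^ 22 - u ^ 2) ≠ 0 := by
      have hx' : x ≠ 0 := by omega
      simp [hx', hu, abs_pos.1 (one_pos.trans_le h1)]
    calc _ ≤ ((5 * x * u * (5 * x ^ 22 - u ^ 2)).natAbs : ℝ) :=
          Nat.cast_le.2 (rad_natAbs_mul_pow_mul_pow_mul_le 5 x u _ 22 2 hne)
      _ = 5 * (x : ℝ) * |(u : ℝ)| * |5 * (x : ℝ) ^ 22 - u ^ 2| := by
          push_cast [Nat.cast_natAbs, abs_mul]; rw [abs_of_pos hx0]; norm_num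
      _ ≤ 5 * (x : ℝ) * (3 * (x : ℝ) ^ 11) * (4 * X) := by gcongr
      _ = 60 * (x : ℝ) ^ 12 * X := by ring
  have habc' := H (5 * x ^ 22) (u ^ 2) (by positivity) (pow_ne_zero 2 hu)
    (by intro h; rw [h, sub_self] at h1; norm_num at h1)
  push_cast at habc'
  rw [abs_of_pos (by positivity)] at habc'
  calc (x : ℝ) ^ 22 ≤ C * |5 * (x : ℝ) ^ 22 - u ^ 2| *
        (rad (5 * x ^ 22 * u ^ 2 * (5 * x ^ 22 - u ^ 2)).natAbs : ℝ) ^ (1 + ε) / 5 := by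
        linarith
    _ ≤ C * (4 * X) * (60 * (x : ℝ) ^ 12 * X) ^ (1 + ε) / 5 := by gcongr
    _ = 4 / 5 * C * 60 ^ (1 + ε) * X * ((x : ℝ) ^ 12 * X) ^ (1 + ε) := by
        rw [mul_assoc 60, mul_rpow (by norm_num) (by positivity)]; ring

lemma le_mul_rpow_of_pow_le_mul_rpow {x X K ε e : ℝ} (hx : 0 < x) (hX : 0 < X) (hK : 0 ≤ K)
    (hε : 12 * ε < 10) (he : 2 + ε = (10 - 12 * ε) * e)
    (h : x ^ 22 ≤ K * X * (x ^ 12 * X) ^ (1 + ε)) :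
    x ≤ K ^ (10 - 12 * ε)⁻¹ * X ^ e := by
  set d := 10 - 12 * ε
  have hd : 0 < d := by linarith
  have key : x ^ d ≤ K * X ^ (2 + ε) := by
    have hx22 : x ^ 22 = x ^ (12 * (1 + ε)) * x ^ d := by
      rw [← rpow_add hx, ← rpow_natCast]; congr 1; push_cast; ring
    have hrhs : K * X * (x ^ 12 * X) ^ (1 + ε) = x ^ (12 * (1 + ε)) * (K * X ^ (2 + ε)) := by
      rw [mul_rpow (by positivity) hX.le, ← rpow_natCast, ← rpow_mul hx.le,
        show (2 : ℝ) + ε = 1 + (1 + ε) by ring, rpow_add hX 1 (1 + ε), rpow_one]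
      push_cast; ring
    rw [hx22, hrhs] at h
    exact le_of_mul_le_mul_left h (rpow_pos_of_pos hx _)
  calc x = (x ^ d) ^ d⁻¹ := (rpow_rpow_inv hx.le hd.ne').symm
    _ ≤ (K * X ^ (2 + ε)) ^ d⁻¹ := rpow_le_rpow (by positivity) key (by positivity)
    _ = K ^ d⁻¹ * X ^ e := by
        rw [mul_rpow hK (by positivity), ← rpow_mul hX.le, he, mul_comm d e,
          mul_inv_cancel_right₀ hd.ne']

theorem ABCConjecture.exists_le_mul_rpow_of_abs_five_mul_pow_sub_sq_le (habc : ABCConjecture)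
    {η : ℝ} (hη : 0 < η) :
    ∃ K > 0, ∀ X : ℝ, 1 ≤ X → ∀ x u : ℤ, 1 ≤ x → 1 ≤ |5 * x ^ 22 - u ^ 2| →
      ((|5 * x ^ 22 - u ^ 2| : ℤ) : ℝ) ≤ 4 * X → (x : ℝ) ≤ K * X ^ ((1 : ℝ) / 5 + η) := by
  set ε := 50 * η / (17 + 60 * η) with hε_def
  have hε : 0 < ε := by positivity
  have hε10 : 12 * ε < 10 := by
    rw [mul_div_assoc', div_lt_iff₀ (by positivity)]; linarith
  have he : 2 + ε = (10 - 12 * ε) * (1 / 5 + η) := by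
    rw [hε_def]; field_simp; ring
  obtain ⟨K, hK, H⟩ := habc.exists_pow_le_of_abs_five_mul_pow_sub_sq_le hε
  refine ⟨max 1 (K ^ (10 - 12 * ε)⁻¹), by positivity, fun X hX x u hx h1 h2 => ?_⟩
  have hx0 : (0 : ℝ) < x := by exact_mod_cast hx
  rcases le_or_gt ((x : ℝ) ^ 22) X with hsmall | hlarge
  · calc (x : ℝ) ≤ X ^ (22 : ℝ)⁻¹ :=
          (le_rpow_inv_iff_of_pos hx0.le (by positivity) (by norm_num)).2 (by exact_mod_cast hsmall)
      _ ≤ X ^ ((1 : ℝ) / 5 + η) := rpow_le_rpow_of_exponent_le hX (by norm_num; linarith)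
      _ ≤ max 1 (K ^ (10 - 12 * ε)⁻¹) * X ^ ((1 : ℝ) / 5 + η) :=
          le_mul_of_one_le_left (by positivity) (le_max_left _ _)
  · exact (le_mul_rpow_of_pow_le_mul_rpow hx0 (by positivity) hK.le hε10 he
      (H X x u hx hlarge h1 h2)).trans (by gcongr; exact le_max_right _ _)

lemma finite_preimage_intCast_Icc (a b : ℝ) : (Int.cast ⁻¹' Set.Icc a b : Set ℤ).Finite := by
  rw [Int.preimage_Icc]; exact Set.finite_Icc _ _

lemma ncard_preimage_intCast_Icc_le {a b : ℝ} (hab : a ≤ b) :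
    ((Int.cast ⁻¹' Set.Icc a b : Set ℤ).ncard : ℝ) ≤ b - a + 1 := by
  rw [Int.preimage_Icc, ← Finset.coe_Icc, Set.ncard_coe_finset, Int.card_Icc,
    ← Int.cast_natCast, Int.toNat_eq_max]
  push_cast
  refine max_le ?_ (by linarith)
  linarith [Int.floor_le b, Int.le_ceil a]

lemma setOf_abs_sub_sq_le_subset (A r : ℝ) :
    {u : ℤ | |A - u ^ 2| ≤ r} ⊆
      Int.cast ⁻¹' Set.Icc √(A - r) √(A + r) ∪ Int.cast ⁻¹' Set.Icc (-√(A + r)) (-√(A - r)) := by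
  intro u (hu : |A - u ^ 2| ≤ r)
  obtain ⟨hlo, hhi⟩ := abs_le.mp hu
  have hlo' : √(A - r) ≤ |(u : ℝ)| := by
    rw [← sqrt_sq_eq_abs]; exact sqrt_le_sqrt (by linarith)
  have hhi' : |(u : ℝ)| ≤ √(A + r) := by
    rw [← sqrt_sq_eq_abs]; exact sqrt_le_sqrt (by linarith)
  rcases abs_cases (u : ℝ) with ⟨h, _⟩ | ⟨h, _⟩
  · left; rw [h] at hlo' hhi'; exact ⟨hlo', hhi'⟩
  · right; rw [h] at hlo' hhi'; constructor <;> linarith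

lemma finite_setOf_abs_sub_sq_le (A r : ℝ) : {u : ℤ | |A - u ^ 2| ≤ r}.Finite :=
  ((finite_preimage_intCast_Icc _ _).union (finite_preimage_intCast_Icc _ _)).subset
    (setOf_abs_sub_sq_le_subset A r)

lemma ncard_setOf_abs_sub_sq_le {A r : ℝ} (hr : 0 ≤ r) :
    ({u : ℤ | |A - u ^ 2| ≤ r}.ncard : ℝ) ≤ 2 * (√(A + r) - √(A - r) + 1) := by
  have hab : √(A - r) ≤ √(A + r) := sqrt_le_sqrt (by linarith)
  have hunion : ({u : ℤ | |A - u ^ 2| ≤ r}.ncard : ℝ) ≤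
      (Int.cast ⁻¹' Set.Icc √(A - r) √(A + r) : Set ℤ).ncard +
        (Int.cast ⁻¹' Set.Icc (-√(A + r)) (-√(A - r)) : Set ℤ).ncard := by
    exact_mod_cast (Set.ncard_le_ncard (setOf_abs_sub_sq_le_subset A r)
      ((finite_preimage_intCast_Icc _ _).union (finite_preimage_intCast_Icc _ _))).trans
        (Set.ncard_union_le _ _)
  linarith [ncard_preimage_intCast_Icc_le hab, ncard_preimage_intCast_Icc_le (neg_le_neg hab)]

lemma sqrt_add_sub_sqrt_sub_le_sqrt {A r : ℝ} (hr : 0 ≤ r) : √(A + r) - √(A - r) ≤ √(2 * r) := by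
  rcases le_total r A with h | h
  · suffices √(A + r) ≤ √(A - r) + √(2 * r) by linarith
    rw [sqrt_le_iff]
    refine ⟨by positivity, ?_⟩
    nlinarith [sq_sqrt (by linarith : 0 ≤ A - r), sq_sqrt (by linarith : 0 ≤ 2 * r),
      mul_nonneg (sqrt_nonneg (A - r)) (sqrt_nonneg (2 * r))]
  · linarith [sqrt_le_sqrt (by linarith : A + r ≤ 2 * r), sqrt_nonneg (A - r)]

lemma sqrt_add_sub_sqrt_sub_le_div {A r : ℝ} (hA : 0 < A) (hr : 0 ≤ r) :
    √(A + r) - √(A - r) ≤ 2 * r / √A := by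
  have hsA := sq_sqrt hA.le
  have hs := sq_sqrt (by linarith : 0 ≤ A + r)
  rw [le_div_iff₀ (sqrt_pos.2 hA)]
  rcases le_total r A with h | h
  · have ht := sq_sqrt (by linarith : 0 ≤ A - r)
    have h₁ : √A ≤ √(A + r) := sqrt_le_sqrt (by linarith)
    have h₂ : √(A - r) ≤ √(A + r) := sqrt_le_sqrt (by linarith)
    nlinarith [sqrt_nonneg (A - r), mul_le_mul_of_nonneg_left h₁ (sub_nonneg.2 h₂)]
  · rw [sqrt_eq_zero'.2 (by linarith : A - r ≤ 0), sub_zero]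
    nlinarith [sqrt_nonneg A, sqrt_nonneg (A + r), mul_nonneg (sqrt_nonneg A) (sqrt_nonneg (A + r))]

lemma ncard_setOf_abs_five_mul_pow_sub_sq_le {t x : ℝ} (ht : 0 ≤ t) (hx : 0 < x) :
    ({u : ℤ | |5 * x ^ 22 - u ^ 2| ≤ 4 * t ^ 22}.ncard : ℝ) ≤
      2 + 16 * t ^ 11 * min 1 ((t / x) ^ 11) := by
  have hA : 0 < 5 * x ^ 22 := by positivity
  have hr : 0 ≤ 4 * t ^ 22 := by positivity
  have hsqrt : √(2 * (4 * t ^ 22)) ≤ 8 * t ^ 11 :=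
    sqrt_le_iff.2 ⟨by positivity, by nlinarith [pow_nonneg ht 22]⟩
  have hdiv : 2 * (4 * t ^ 22) / √(5 * x ^ 22) ≤ 8 * t ^ 11 * (t / x) ^ 11 := by
    have : x ^ 11 ≤ √(5 * x ^ 22) :=
      (le_sqrt (by positivity) hA.le).2 (by nlinarith [pow_pos hx 22])
    calc 2 * (4 * t ^ 22) / √(5 * x ^ 22) ≤ 2 * (4 * t ^ 22) / x ^ 11 := by gcongr
      _ = 8 * t ^ 11 * (t / x) ^ 11 := by field_simp; ring
  have hgap : √(5 * x ^ 22 + 4 * t ^ 22) - √(5 * x ^ 22 - 4 * t ^ 22) ≤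
      8 * t ^ 11 * min 1 ((t / x) ^ 11) := by
    rw [mul_min_of_nonneg _ _ (by positivity), mul_one]
    exact le_min ((sqrt_add_sub_sqrt_sub_le_sqrt hr).trans hsqrt)
      ((sqrt_add_sub_sqrt_sub_le_div hA hr).trans hdiv)
  linarith [ncard_setOf_abs_sub_sq_le (A := 5 * x ^ 22) hr]

lemma sum_Ioo_div_pow_le {t : ℝ} (ht : 0 ≤ t) {T : ℕ} (hT : t < T + 1) {k : ℕ} (hk : 2 ≤ k)
    (n : ℕ) : ∑ x ∈ Finset.Ioo T n, (t / x) ^ k ≤ 2 * t := by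
  obtain ⟨m, rfl⟩ := Nat.exists_eq_add_of_le' hk
  calc _ ≤ ∑ x ∈ Finset.Ioo T n, t ^ (m + 2) / (T + 1) ^ m * ((x : ℝ) ^ 2)⁻¹ := by
        refine Finset.sum_le_sum fun x hx => ?_
        have hx : (T : ℝ) + 1 ≤ x := by exact_mod_cast (Finset.mem_Ioo.1 hx).1
        calc (t / x) ^ (m + 2) = t ^ (m + 2) / (x : ℝ) ^ m * ((x : ℝ) ^ 2)⁻¹ := by
              rw [div_pow, pow_add (x : ℝ), ← div_div, div_eq_mul_inv _ ((x : ℝ) ^ 2)]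
          _ ≤ t ^ (m + 2) / (T + 1) ^ m * ((x : ℝ) ^ 2)⁻¹ := by gcongr
    _ = t ^ (m + 2) / (T + 1) ^ m * ∑ x ∈ Finset.Ioo T n, ((x : ℝ) ^ 2)⁻¹ :=
        (Finset.mul_sum ..).symm
    _ ≤ t ^ (m + 2) / (T + 1) ^ m * (2 / (T + 1)) := by
        gcongr; exact sum_Ioo_inv_sq_le T n
    _ ≤ 2 * t := by
        have : t ^ (m + 1) ≤ (T + 1) ^ (m + 1) := pow_le_pow_left₀ ht hT.le _
        rw [div_mul_div_comm, div_le_iff₀ (by positivity), ← pow_succ, pow_succ' t]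
        nlinarith [mul_le_mul_of_nonneg_left this ht]

lemma sum_min_one_div_pow_le {t : ℝ} (ht : 0 ≤ t) {k : ℕ} (hk : 2 ≤ k) (n : ℕ) :
    ∑ x ∈ Finset.Icc 1 n, min 1 ((t / x) ^ k) ≤ 3 * t := by
  set T := ⌊t⌋₊
  rw [← Finset.sum_filter_add_sum_filter_not _ (· ≤ T)]
  have head : ∑ x ∈ (Finset.Icc 1 n).filter (· ≤ T), min 1 ((t / x) ^ k) ≤ t := by
    calc _ ≤ ∑ x ∈ (Finset.Icc 1 n).filter (· ≤ T), (1 : ℝ) :=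
          Finset.sum_le_sum fun _ _ => min_le_left _ _
      _ ≤ ∑ x ∈ Finset.Icc 1 T, (1 : ℝ) := by
          refine Finset.sum_le_sum_of_subset_of_nonneg (fun x hx => ?_) (fun _ _ _ => zero_le_one)
          simp only [Finset.mem_filter, Finset.mem_Icc] at hx ⊢
          omega
      _ ≤ t := by simpa using Nat.floor_le ht
  have tail : ∑ x ∈ (Finset.Icc 1 n).filter (¬ · ≤ T), min 1 ((t / x) ^ k) ≤ 2 * t := by
    calc _ ≤ ∑ x ∈ (Finset.Icc 1 n).filter (¬ · ≤ T), (t / x) ^ k :=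
          Finset.sum_le_sum fun _ _ => min_le_right _ _
      _ ≤ ∑ x ∈ Finset.Ioo T (n + 1), (t / x) ^ k := by
          refine Finset.sum_le_sum_of_subset_of_nonneg (fun x hx => ?_) (fun _ _ _ => by positivity)
          simp only [Finset.mem_filter, Finset.mem_Icc, Finset.mem_Ioo] at hx ⊢
          omega
      _ ≤ 2 * t := sum_Ioo_div_pow_le ht (Nat.lt_floor_add_one t) hk (n + 1)
  linarith

lemma Set.ncard_le_sum_ncard_of_subset_biUnion_image_prodMk {ι α β : Type*} {S : Set (α × β)}
    (I : Finset ι) (f : ι → α) (U : ι → Set β) (hU : ∀ i ∈ I, (U i).Finite)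
    (hS : S ⊆ ⋃ i ∈ I, Prod.mk (f i) '' U i) : S.ncard ≤ ∑ i ∈ I, (U i).ncard := by
  have hfin : (⋃ i ∈ I, Prod.mk (f i) '' U i).Finite :=
    I.finite_toSet.biUnion fun i hi => (hU i hi).image _
  have := (Set.ncard_le_ncard hS hfin).trans (I.set_ncard_biUnion_le _)
  simpa only [Set.ncard_image_of_injective _ (Prod.mk_right_injective _)] using this

lemma sum_ncard_setOf_abs_five_mul_pow_sub_sq_le {t : ℝ} (ht : 0 ≤ t) (B : ℕ) :
    ∑ x ∈ Finset.Icc 1 B, ({u : ℤ | |5 * (x : ℝ) ^ 22 - u ^ 2| ≤ 4 * t ^ 22}.ncard : ℝ) ≤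
      2 * B + 48 * t ^ 12 := by
  calc _ ≤ ∑ x ∈ Finset.Icc 1 B, (2 + 16 * t ^ 11 * min 1 ((t / x) ^ 11)) := by
        refine Finset.sum_le_sum fun x hx => ncard_setOf_abs_five_mul_pow_sub_sq_le ht ?_
        exact_mod_cast (Finset.mem_Icc.1 hx).1
    _ ≤ 2 * B + 16 * t ^ 11 * (3 * t) := by
        rw [Finset.sum_add_distrib, ← Finset.mul_sum, Finset.sum_const, Nat.card_Icc,
          nsmul_eq_mul, Nat.add_sub_cancel, mul_comm]
        gcongr
        exact sum_min_one_div_pow_le ht (by norm_num) B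
    _ = 2 * B + 48 * t ^ 12 := by ring

theorem abc_implies_N4_bound (habc : ABCConjecture) :
    ∀ η : ℝ, 0 < η → ∃ C : ℝ, 0 < C ∧ ∀ X : ℝ, 4 ≤ X →
      (Set.ncard {p : ℤ × ℤ | 1 ≤ p.1 ∧
          1 ≤ |5 * p.1 ^ 22 - p.2 ^ 2| ∧ ((|5 * p.1 ^ 22 - p.2 ^ 2| : ℤ) : ℝ) ≤ 4 * X} : ℝ)
        ≤ C * (X ^ ((6 : ℝ) / 11) + X ^ ((1 : ℝ) / 5 + η)) := by
  intro η hη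
  obtain ⟨K, hK, hx_le⟩ := habc.exists_le_mul_rpow_of_abs_five_mul_pow_sub_sq_le hη
  refine ⟨48 + 2 * K, by positivity, fun X hX => ?_⟩
  set t := X ^ (22 : ℝ)⁻¹
  have ht : 0 ≤ t := by positivity
  have hXt : X = t ^ 22 := (rpow_inv_natCast_pow (n := 22) (by positivity) (by norm_num)).symm
  have h611 : X ^ ((6 : ℝ) / 11) = t ^ 12 := by
    rw [← rpow_natCast, ← rpow_mul (by positivity)]; norm_num
  set B := ⌊K * X ^ ((1 : ℝ) / 5 + η)⌋₊
  have hS : {p : ℤ × ℤ | 1 ≤ p.1 ∧ 1 ≤ |5 * p.1 ^ 22 - p.2 ^ 2| ∧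
      ((|5 * p.1 ^ 22 - p.2 ^ 2| : ℤ) : ℝ) ≤ 4 * X} ⊆ ⋃ x ∈ Finset.Icc 1 B,
        Prod.mk (x : ℤ) '' {u : ℤ | |5 * (x : ℝ) ^ 22 - u ^ 2| ≤ 4 * t ^ 22} := by
    rintro ⟨x, u⟩ ⟨hx, h1, h2⟩
    have hxB := hx_le X (by linarith) x u hx h1 h2
    lift x to ℕ using (by omega)
    refine Set.mem_biUnion (x := x) (Finset.mem_Icc.2 ⟨by omega, Nat.le_floor hxB⟩) ⟨u, ?_, rfl⟩
    push_cast at h2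
    simpa only [Set.mem_ofPred_eq, ← hXt] using h2
  calc _ ≤ ∑ x ∈ Finset.Icc 1 B,
        ({u : ℤ | |5 * (x : ℝ) ^ 22 - u ^ 2| ≤ 4 * t ^ 22}.ncard : ℝ) := by
        exact_mod_cast Set.ncard_le_sum_ncard_of_subset_biUnion_image_prodMk _ _ _
          (fun _ _ => finite_setOf_abs_sub_sq_le _ _) hS
    _ ≤ 2 * B + 48 * t ^ 12 := sum_ncard_setOf_abs_five_mul_pow_sub_sq_le ht B
    _ ≤ (48 + 2 * K) * (X ^ ((6 : ℝ) / 11) + X ^ ((1 : ℝ) / 5 + η)) := by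
        have hB : (B : ℝ) ≤ K * X ^ ((1 : ℝ) / 5 + η) := Nat.floor_le (by positivity)
        rw [h611]
        nlinarith [pow_nonneg ht 12, rpow_nonneg (by positivity : 0 ≤ X) ((1 : ℝ) / 5 + η)]
end

section
/- For every natural number N and every natural number m ≤ N, the coefficient of X^m in the integer polynomial ∏_{n=1}^{N} (1 − X^n)^3 equals (−1)^k (2k+1) if m = k(k+1)/2 for some natural number k, and equals 0 otherwise. -/
/-!
Rothe's `q`-binomial theorem expands the finite triple product
`∏_{j<2N} (q^(N-1) - q^j z) = q^(3·C(N,2)) ∏_{t<N} (q^t - z) ∏_{i<N} (1 - q^(i+1) z)`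
with coefficients `(-1)^k q^((N-1)(2N-k)) q^C(k,2) [2N k]_q`. The factor `t = 0` is `1 - z`, so
the derivative at `z = 1` is `(q;q)_(N-1) (q;q)_N` up to sign and `q^(3·C(N,2))`. After
multiplying by `(q;q)_N`, use `(q;q)_N [2N k]_q ≡ 1 mod q^(min(k, 2N-k) + 1)`: modulo `q^N` only
the leading monomials `q^(j(j+1)/2)` of the terms `k = N-1-j` and `k = N+j` survive, with weights
adding up to `±(-1)^j (2j+1)`. Since `(q;q)_N ≡ (q;q)_(N-1) mod q^N`, this gives
`(q;q)_N³ ≡ ∑_{j<N} (-1)^j (2j+1) q^(j(j+1)/2) mod q^N`, and the extra factor `1 - q^(N+1)` does not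
change the coefficients below `N + 1`.
-/

open Polynomial Finset

lemma choose_two_succ (k : ℕ) : (k + 1).choose 2 = k.choose 2 + k := by
  rw [Nat.choose_succ_succ', Nat.choose_one_right, add_comm]

lemma two_mul_choose_two (N : ℕ) : 2 * N.choose 2 = N * (N - 1) := by
  rw [Nat.choose_two_right, Nat.mul_div_cancel' (Nat.even_mul_pred_self N).two_dvd]

lemma strictMono_choose_two_succ : StrictMono fun j => (j + 1).choose 2 :=
  strictMono_nat_of_lt_succ fun j => by simp only [choose_two_succ (j + 1)]; omega

lemma choose_two_add_mul_eq_of_le {N j : ℕ} (hj : j ≤ N) :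
    (N + j).choose 2 + (N - 1) * (2 * N - (N + j)) = 3 * N.choose 2 + (j + 1).choose 2 := by
  rcases Nat.eq_zero_or_pos N with rfl | hN
  · obtain rfl : j = 0 := by omega
    rfl
  · qify [hj, hN, show N + j ≤ 2 * N by omega]
    simp only [Nat.cast_choose_two]
    push_cast
    ring

lemma choose_two_sub_mul_eq_of_lt {N j : ℕ} (hj : j < N) :
    (N - 1 - j).choose 2 + (N - 1) * (2 * N - (N - 1 - j)) =
      3 * N.choose 2 + (j + 1).choose 2 := by
  qify [hj, show 1 ≤ N by omega, show j ≤ N - 1 by omega, show N - 1 - j ≤ 2 * N by omega]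
  simp only [Nat.cast_choose_two]
  push_cast [show 1 ≤ N by omega, show j ≤ N - 1 by omega]
  ring

lemma sum_range_two_mul_add_one {M : Type*} [AddCommMonoid M] (f : ℕ → M) (N : ℕ) :
    ∑ k ∈ range (2 * N + 1), f k = ∑ j ∈ range N, (f (N - 1 - j) + f (N + j)) + f (2 * N) := by
  rw [two_mul, add_assoc, sum_range_add, sum_range_succ, ← sum_range_reflect, sum_add_distrib,
    add_assoc]

section RotheCoeff

variable {R : Type*} [CommSemiring R]

/-- `rotheCoeff q n k = q^(k choose 2) [n choose k]_q`. -/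
def rotheCoeff (q : R) : ℕ → ℕ → R
  | 0, 0 => 1
  | 0, _ + 1 => 0
  | _ + 1, 0 => 1
  | n + 1, k + 1 => rotheCoeff q n (k + 1) + q ^ n * rotheCoeff q n k

variable (q : R)

@[simp]
lemma rotheCoeff_zero_right (n : ℕ) : rotheCoeff q n 0 = 1 := by
  cases n <;> rfl

lemma rotheCoeff_succ_succ (n k : ℕ) :
    rotheCoeff q (n + 1) (k + 1) = rotheCoeff q n (k + 1) + q ^ n * rotheCoeff q n k := rfl

lemma rotheCoeff_of_lt {n k : ℕ} (h : n < k) : rotheCoeff q n k = 0 := by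
  induction n generalizing k with
  | zero => obtain ⟨k, rfl⟩ := Nat.exists_eq_succ_of_ne_zero h.ne'; rfl
  | succ n ih =>
    obtain ⟨k, rfl⟩ := Nat.exists_eq_succ_of_ne_zero (by omega : k ≠ 0)
    rw [rotheCoeff_succ_succ, ih (by omega), ih (by omega), mul_zero, add_zero]

lemma map_rotheCoeff {S : Type*} [CommSemiring S] (f : R →+* S) (n k : ℕ) :
    f (rotheCoeff q n k) = rotheCoeff (f q) n k := by
  induction n generalizing k with
  | zero => cases k <;> simp [rotheCoeff]
  | succ n ih => cases k <;> simp [rotheCoeff, ih]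

/-- Rothe's `q`-binomial theorem. -/
theorem prod_range_add_pow_mul_eq_sum (n : ℕ) (u v : R) :
    ∏ j ∈ range n, (u + q ^ j * v) =
      ∑ k ∈ range (n + 1), rotheCoeff q n k * u ^ (n - k) * v ^ k := by
  induction n with
  | zero => simp
  | succ n ih =>
    set S := ∑ k ∈ range (n + 1), rotheCoeff q n k * u ^ (n - k) * v ^ k
    have shift_u : ∑ k ∈ range (n + 1), rotheCoeff q n (k + 1) * u ^ (n - k) * v ^ (k + 1) +
        u ^ (n + 1) = S * u := by
      rw [sum_range_succ, rotheCoeff_of_lt q n.lt_succ_self, sum_mul, sum_range_succ' _ n]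
      simp only [zero_mul, add_zero, rotheCoeff_zero_right, Nat.sub_zero, pow_zero, one_mul,
        mul_one, ← pow_succ]
      congr 1
      refine sum_congr rfl fun k hk => ?_
      rw [show n - k = n - (k + 1) + 1 by grind, pow_succ]
      ring
    have shift_v : ∑ k ∈ range (n + 1), q ^ n * rotheCoeff q n k * u ^ (n - k) * v ^ (k + 1) =
        S * (q ^ n * v) := by
      rw [sum_mul]
      exact sum_congr rfl fun k _ => by ring
    rw [prod_range_succ, ih, sum_range_succ' _ (n + 1)]
    simp only [rotheCoeff_succ_succ, add_mul, sum_add_distrib, Nat.add_sub_add_right,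
      rotheCoeff_zero_right, Nat.sub_zero, pow_zero, mul_one, one_mul]
    rw [mul_add, ← shift_u, ← shift_v]
    ring

end RotheCoeff

section QPochhammer

variable {R : Type*} [CommRing R]

def qPochhammer (q : R) (n : ℕ) : R := ∏ i ∈ range n, (1 - q ^ (i + 1))

variable (q : R)

lemma qPochhammer_succ (n : ℕ) :
    qPochhammer q (n + 1) = qPochhammer q n * (1 - q ^ (n + 1)) :=
  prod_range_succ _ _

lemma qPochhammer_mul_prod_Ico {m n : ℕ} (h : m ≤ n) :
    qPochhammer q m * ∏ i ∈ Ico m n, (1 - q ^ (i + 1)) = qPochhammer q n :=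
  prod_range_mul_prod_Ico _ h

lemma prod_Icc_one_sub_pow (N : ℕ) : ∏ n ∈ Icc 1 N, (1 - q ^ n) = qPochhammer q N := by
  induction N with
  | zero => simp [qPochhammer]
  | succ N ih => rw [prod_Icc_succ_top (by omega), ih, qPochhammer_succ]

lemma pow_dvd_qPochhammer_succ_pow_sub (N e : ℕ) :
    q ^ (N + 1) ∣ qPochhammer q (N + 1) ^ e - qPochhammer q N ^ e := by
  have h := sub_dvd_pow_sub_pow (1 - q ^ (N + 1)) 1 e
  rw [one_pow, sub_sub_cancel_left, neg_dvd] at h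
  rw [qPochhammer_succ, mul_pow, ← mul_sub_one]
  exact h.mul_left _

lemma rotheCoeff_mul_qPochhammer {n k : ℕ} (hk : k ≤ n) :
    rotheCoeff q n k * qPochhammer q k = q ^ k.choose 2 * ∏ i ∈ range k, (1 - q ^ (n - i)) := by
  induction n generalizing k with
  | zero =>
    obtain rfl : k = 0 := by omega
    simp [qPochhammer]
  | succ n ih =>
    obtain _ | k := k
    · simp [qPochhammer]
    have top : rotheCoeff q n (k + 1) * qPochhammer q (k + 1) =
        q ^ (k + 1).choose 2 * ∏ i ∈ range (k + 1), (1 - q ^ (n - i)) := by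
      rcases Nat.lt_or_ge k n with hkn | hkn
      · exact ih hkn
      · rw [rotheCoeff_of_lt q (by omega), zero_mul, prod_eq_zero (i := n) (by simp; omega)
          (by simp), mul_zero]
    obtain ⟨d, rfl⟩ := Nat.exists_eq_add_of_le (show k ≤ n by omega)
    have low := ih (show k ≤ k + d by omega)
    rw [prod_range_succ, Nat.add_sub_cancel_left] at top
    rw [rotheCoeff_succ_succ, prod_range_succ', choose_two_succ] at *
    simp only [Nat.add_sub_add_right, Nat.sub_zero] at *
    linear_combination top + q ^ (k + d) * (1 - q ^ (k + 1)) * low +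
      q ^ (k + d) * rotheCoeff q (k + d) k * qPochhammer_succ q k

lemma rotheCoeff_mul_qPochhammer_sub {n k : ℕ} (hk : k ≤ n) :
    rotheCoeff q n k * qPochhammer q (n - k) =
      q ^ k.choose 2 * ∏ i ∈ range (n - k), (1 - q ^ (n - i)) := by
  induction n generalizing k with
  | zero =>
    obtain rfl : k = 0 := by omega
    simp [qPochhammer]
  | succ n ih =>
    obtain _ | k := k
    · rw [rotheCoeff_zero_right, one_mul, Nat.choose_zero_succ, pow_zero, one_mul, Nat.sub_zero,
        qPochhammer, ← prod_range_reflect]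
      exact prod_congr rfl fun i hi => by grind
    rw [Nat.add_sub_add_right, rotheCoeff_succ_succ, add_mul, mul_assoc (q ^ n), ih (by omega)]
    rcases Nat.lt_or_ge k n with hkn | hkn
    · obtain ⟨e, rfl⟩ := Nat.exists_eq_add_of_lt hkn
      have high := ih (show k + 1 ≤ k + e + 1 by omega)
      rw [show k + e + 1 - k = e + 1 by omega, prod_range_succ, prod_range_succ' _ e,
        qPochhammer_succ, choose_two_succ]
      rw [show k + e + 1 - (k + 1) = e by omega, choose_two_succ] at high
      simp only [show k + e + 1 - e = k + 1 by omega, Nat.add_sub_add_right, Nat.sub_zero]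
      linear_combination (1 - q ^ (e + 1)) * high
    · obtain rfl : k = n := by omega
      simp [rotheCoeff_of_lt, choose_two_succ, pow_add]
      ring

lemma pow_dvd_prod_one_sub_pow_sub_one {ι : Type*} (s : Finset ι) (f : ι → ℕ) {b : ℕ}
    (hf : ∀ i ∈ s, b ≤ f i) : q ^ b ∣ ∏ i ∈ s, (1 - q ^ f i) - 1 := by
  classical
  induction s using Finset.induction_on with
  | empty => simp
  | insert a s ha ih =>
    rw [prod_insert ha, sub_mul, one_mul, sub_right_comm]
    exact dvd_sub (ih fun i hi => hf i (mem_insert_of_mem hi))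
      ((pow_dvd_pow q (hf a (mem_insert_self a s))).mul_right _)

lemma pow_dvd_qPochhammer_mul_sub {N n r e : ℕ} {a : R} (hrN : r ≤ N) (hrn : r ≤ n)
    (ha : a * qPochhammer q r = q ^ e * ∏ i ∈ range r, (1 - q ^ (n - i))) :
    q ^ (e + (min r (n - r) + 1)) ∣ qPochhammer q N * a - q ^ e := by
  have hP := pow_dvd_prod_one_sub_pow_sub_one q (range r) (fun i => n - i)
    (b := min r (n - r) + 1) (fun i hi => by simp at hi; omega)
  have hQ := pow_dvd_prod_one_sub_pow_sub_one q (Ico r N) (fun i => i + 1)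
    (b := min r (n - r) + 1) (fun i hi => by simp at hi; omega)
  rw [← qPochhammer_mul_prod_Ico q hrN, mul_right_comm, mul_comm _ a, ha, mul_assoc, pow_add,
    ← mul_sub_one]
  apply mul_dvd_mul_left
  convert dvd_add (hQ.mul_left (∏ i ∈ range r, (1 - q ^ (n - i)))) hP using 1
  ring

lemma pow_dvd_qPochhammer_mul_rotheCoeff_sub {N n k : ℕ} (hk : k ≤ n)
    (hN : min k (n - k) ≤ N) :
    q ^ (k.choose 2 + (min k (n - k) + 1)) ∣
      qPochhammer q N * rotheCoeff q n k - q ^ k.choose 2 := by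
  rcases le_total k (n - k) with h | h
  · exact pow_dvd_qPochhammer_mul_sub q (by omega) hk (rotheCoeff_mul_qPochhammer q hk)
  · have := pow_dvd_qPochhammer_mul_sub q (N := N) (by omega) (Nat.sub_le n k)
      (rotheCoeff_mul_qPochhammer_sub q hk)
    rwa [Nat.sub_sub_self hk, min_comm] at this

end QPochhammer

section TripleProduct

variable {R : Type*} [CommRing R]

lemma prod_range_two_mul_pow_sub_pow_mul (q y : R) (N : ℕ) :
    ∏ j ∈ range (2 * N), (q ^ (N - 1) - q ^ j * y) =
      q ^ (3 * N.choose 2) *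
        ((∏ t ∈ range N, (q ^ t - y)) * ∏ i ∈ range N, (1 - q ^ (i + 1) * y)) := by
  have low : ∏ j ∈ range N, (q ^ (N - 1) - q ^ j * y) =
      q ^ N.choose 2 * ∏ t ∈ range N, (q ^ t - y) := by
    rw [← prod_range_reflect (fun t => q ^ t - y), Nat.choose_two_right, ← sum_range_id,
      ← prod_pow_eq_pow_sum, ← prod_mul_distrib]
    refine prod_congr rfl fun j hj => ?_
    rw [mul_sub, ← pow_add, show j + (N - 1 - j) = N - 1 by grind]
  have high : ∏ i ∈ range N, (q ^ (N - 1) - q ^ (N + i) * y) =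
      q ^ (2 * N.choose 2) * ∏ i ∈ range N, (1 - q ^ (i + 1) * y) := by
    rw [prod_congr rfl (g := fun i => q ^ (N - 1) * (1 - q ^ (i + 1) * y)), prod_mul_distrib,
      prod_const, card_range, ← pow_mul, two_mul_choose_two, mul_comm N]
    intro i hi
    rw [mul_sub, mul_one, ← mul_assoc, ← pow_add, show N - 1 + (i + 1) = N + i by grind]
  rw [two_mul, prod_range_add, low, high]
  ring

lemma sum_range_natCast_mul_eq_neg_eval_one {n : ℕ} {c : ℕ → R} {h : R[X]}
    (hc : ∑ k ∈ range n, C (c k) * X ^ k = (1 - X) * h) :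
    ∑ k ∈ range n, (k : R) * c k = -h.eval 1 := by
  have := congrArg (fun p => (derivative p).eval 1) hc
  simp only [derivative_sum, derivative_mul, derivative_C, derivative_X_pow, derivative_sub,
    derivative_one, derivative_X, zero_mul, zero_add, eval_finsetSum, eval_add, eval_mul,
    eval_sub, eval_C, eval_pow, eval_X, eval_one, one_pow, mul_one] at this
  simpa [mul_comm] using this

lemma sum_range_natCast_mul_rotheCoeff (q : R) {N : ℕ} (hN : N ≠ 0) :
    ∑ k ∈ range (2 * N + 1),
        (k : R) * ((-1) ^ k * q ^ ((N - 1) * (2 * N - k)) * rotheCoeff q (2 * N) k) =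
      (-1) ^ N * q ^ (3 * N.choose 2) * (qPochhammer q (N - 1) * qPochhammer q N) := by
  obtain ⟨M, rfl⟩ := Nat.exists_eq_succ_of_ne_zero hN
  set h : R[X] := C (q ^ (3 * (M + 1).choose 2)) *
    ((∏ t ∈ range M, (C q ^ (t + 1) - X)) * ∏ i ∈ range (M + 1), (1 - C q ^ (i + 1) * X))
  have expand : ∑ k ∈ range (2 * (M + 1) + 1),
      C ((-1) ^ k * q ^ ((M + 1 - 1) * (2 * (M + 1) - k)) * rotheCoeff q (2 * (M + 1)) k) *
        X ^ k = (1 - X) * h := by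
    calc _ = ∏ j ∈ range (2 * (M + 1)), (C q ^ (M + 1 - 1) + C q ^ j * -(X : R[X])) := by
          rw [prod_range_add_pow_mul_eq_sum]
          refine sum_congr rfl fun k _ => ?_
          simp only [map_mul, map_pow, map_neg, map_one, map_rotheCoeff, neg_pow (X : R[X]),
            pow_mul]
          ring
      _ = (1 - X) * h := by
          simp only [mul_neg, ← sub_eq_add_neg]
          rw [prod_range_two_mul_pow_sub_pow_mul, prod_range_succ' _ M, pow_zero]
          simp only [h, map_pow]
          ring
  have hsign : ∏ t ∈ range M, (q ^ (t + 1) - 1) = (-1) ^ M * qPochhammer q M := by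
    simpa [qPochhammer] using prod_neg (s := range M) (fun t => 1 - q ^ (t + 1))
  rw [sum_range_natCast_mul_eq_neg_eval_one expand]
  simp only [h, eval_mul, eval_C, eval_prod, eval_sub, eval_pow, eval_X, eval_one, hsign, mul_one,
    Nat.succ_eq_add_one, Nat.add_sub_cancel]
  rw [qPochhammer, qPochhammer]
  ring

end TripleProduct

section JacobiCubeSum

variable {R : Type*} [CommRing R]

lemma neg_one_pow_sub_one_sub {N j : ℕ} (hj : j < N) :
    (-1 : R) ^ (N - 1 - j) = -(-1) ^ (N + j) := by
  rw [show N + j = N - 1 - j + 2 * j + 1 by omega, pow_succ, pow_add, pow_mul]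
  simp

variable (q : R)

def jacobiCubeSum (N : ℕ) : R := ∑ j ∈ range N, (-1) ^ j * (2 * j + 1) * q ^ (j + 1).choose 2

lemma pow_dvd_pow_mul_qPochhammer_mul_rotheCoeff_sub {N k e : ℕ} (hk : k ≤ 2 * N)
    (he : k.choose 2 + (N - 1) * (2 * N - k) = 3 * N.choose 2 + e)
    (hN : N ≤ e + (min k (2 * N - k) + 1)) :
    q ^ (3 * N.choose 2 + N) ∣
      q ^ ((N - 1) * (2 * N - k)) * (qPochhammer q N * rotheCoeff q (2 * N) k) -
        q ^ (3 * N.choose 2 + e) := by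
  have h := mul_dvd_mul_left (q ^ ((N - 1) * (2 * N - k)))
    (pow_dvd_qPochhammer_mul_rotheCoeff_sub q (N := N) hk (by omega))
  rw [mul_sub, ← pow_add, ← pow_add, add_comm _ (k.choose 2), ← add_assoc, he] at h
  exact (pow_dvd_pow q (by omega)).trans h

lemma pow_dvd_sum_mul_qPochhammer_sub_jacobiCubeSum (N : ℕ) :
    q ^ (3 * N.choose 2 + N) ∣
      (∑ k ∈ range (2 * N + 1),
          (k : R) * ((-1) ^ k * q ^ ((N - 1) * (2 * N - k)) * rotheCoeff q (2 * N) k)) *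
        qPochhammer q N - (-1) ^ N * q ^ (3 * N.choose 2) * jacobiCubeSum q N := by
  set c : ℕ → R := fun k =>
    q ^ ((N - 1) * (2 * N - k)) * (qPochhammer q N * rotheCoeff q (2 * N) k)
  set Q : ℕ → R := fun j => q ^ (3 * N.choose 2 + (j + 1).choose 2)
  have low (j : ℕ) (hj : j < N) : q ^ (3 * N.choose 2 + N) ∣ c (N - 1 - j) - Q j :=
    pow_dvd_pow_mul_qPochhammer_mul_rotheCoeff_sub q (by omega) (choose_two_sub_mul_eq_of_lt hj)
      (by have := choose_two_succ j; omega)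
  have high (j : ℕ) (hj : j ≤ N) : q ^ (3 * N.choose 2 + N) ∣ c (N + j) - Q j :=
    pow_dvd_pow_mul_qPochhammer_mul_rotheCoeff_sub q (by omega) (choose_two_add_mul_eq_of_le hj)
      (by have := choose_two_succ j; omega)
  rw [sum_mul, sum_range_two_mul_add_one, jacobiCubeSum, mul_sum, add_sub_right_comm,
    ← sum_sub_distrib]
  refine dvd_add (dvd_sum fun j hj => ?_) ?_
  · rw [mem_range] at hj
    convert dvd_add ((low j hj).mul_left (-(-1) ^ (N + j) * (N - 1 - j)))
      ((high j hj.le).mul_left ((-1) ^ (N + j) * (N + j))) using 1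
    rw [neg_one_pow_sub_one_sub hj, Nat.cast_sub (by omega), Nat.cast_sub (by omega)]
    simp only [c, Q, pow_add]
    push_cast
    ring
  · convert (dvd_add (high N le_rfl) (pow_dvd_pow q (by have := choose_two_succ N; omega) :
      _ ∣ Q N)).mul_left ((2 * N : ℕ) * (-1) ^ (2 * N) : R) using 1
    simp only [c, ← two_mul]
    ring

end JacobiCubeSum

theorem X_pow_dvd_qPochhammer_pow_three_sub_jacobiCubeSum (N : ℕ) :
    (X : ℤ[X]) ^ N ∣ qPochhammer X N ^ 3 - jacobiCubeSum X N := by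
  obtain _ | M := N
  · simp
  have key := pow_dvd_sum_mul_qPochhammer_sub_jacobiCubeSum (X : ℤ[X]) (M + 1)
  rw [sum_range_natCast_mul_rotheCoeff X (N := M + 1) (by omega), Nat.add_sub_cancel] at key
  have reduced : (X : ℤ[X]) ^ (M + 1) ∣
      (-1) ^ (M + 1) * (qPochhammer X M * qPochhammer X (M + 1) ^ 2 - jacobiCubeSum X (M + 1)) :=
    (mul_dvd_mul_iff_left (pow_ne_zero (3 * (M + 1).choose 2) X_ne_zero)).mp
      (by convert key using 1 <;> ring)
  rw [(isUnit_neg_one.pow _).dvd_mul_left] at reduced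
  convert dvd_sub reduced
    (dvd_mul_right (X ^ (M + 1)) (qPochhammer X M * qPochhammer X (M + 1) ^ 2)) using 1
  rw [qPochhammer_succ]
  ring

lemma coeff_jacobiCubeSum_X (M m : ℕ) :
    (jacobiCubeSum (X : ℤ[X]) M).coeff m =
      ∑ j ∈ range M, if m = (j + 1).choose 2 then (-1 : ℤ) ^ j * (2 * j + 1) else 0 := by
  rw [jacobiCubeSum, finsetSum_coeff]
  refine sum_congr rfl fun j _ => ?_
  rw [← coeff_C_mul_X_pow]
  simp

theorem jacobi_identity_coeff (N m : ℕ) (hm : m ≤ N) :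
    (∀ k : ℕ, m = k * (k + 1) / 2 →
      (∏ n ∈ Finset.Icc 1 N, ((1 : Polynomial ℤ) - Polynomial.X ^ n) ^ 3).coeff m
        = (-1 : ℤ) ^ k * (2 * (k : ℤ) + 1)) ∧
    ((¬ ∃ k : ℕ, m = k * (k + 1) / 2) →
      (∏ n ∈ Finset.Icc 1 N, ((1 : Polynomial ℤ) - Polynomial.X ^ n) ^ 3).coeff m = 0) := by
  have htri (k : ℕ) : k * (k + 1) / 2 = (k + 1).choose 2 := by
    rw [Nat.choose_two_right, Nat.add_sub_cancel, mul_comm]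
  have hcoeff : (∏ n ∈ Icc 1 N, ((1 : ℤ[X]) - X ^ n) ^ 3).coeff m =
      (jacobiCubeSum (X : ℤ[X]) (N + 1)).coeff m := by
    rw [prod_pow, prod_Icc_one_sub_pow, ← sub_eq_zero, ← coeff_sub]
    refine (X_pow_dvd_iff (n := N + 1)).mp ?_ m (by omega)
    simpa only [sub_sub_sub_cancel_left] using
      dvd_sub (X_pow_dvd_qPochhammer_pow_three_sub_jacobiCubeSum (N + 1))
      (pow_dvd_qPochhammer_succ_pow_sub X N 3)
  simp only [htri, hcoeff, coeff_jacobiCubeSum_X]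
  refine ⟨fun k hk => ?_, fun hk => sum_eq_zero fun j _ => if_neg fun h => hk ⟨j, h⟩⟩
  have hkN : k < N + 1 := by have := choose_two_succ k; omega
  simp only [hk, strictMono_choose_two_succ.injective.eq_iff, sum_ite_eq, mem_range, hkN, if_true]
end
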